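/- arXiv:0706.0498 — 12 statements merged into one kernel-verified Lean document; each statement's English description precedes it below -/
import Mathlib

section
/- Let η₁,…,ηₙ be independent Bernoulli random variables with success probabilities p₁ ≥ p₂ ≥ … ≥ pₙ, and let S = η₁ + ⋯ + ηₙ. Then for i < j, E[ηᵢ/(S ∨ 1)] ≥ E[ηⱼ/(S ∨ 1)], i.e. the sequence i ↦ E[ηᵢ/max(S,1)] is decreasing. -/
/-!
Write `S = ηᵢ + ηⱼ + T` with `T` the sum of the other variables. Where `ηᵢ = ηⱼ` the two
integrands agree, and otherwise `S = T + 1`, so pointwise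
`ηᵢ / (S ∨ 1) - ηⱼ / (S ∨ 1) = (ηᵢ - ηⱼ) / (T + 1)`. As `ηᵢ - ηⱼ` is independent of `T`, the
expectation of the right-hand side is `(pᵢ - pⱼ) E[1 / (T + 1)] ≥ 0`.
-/

open MeasureTheory ProbabilityTheory Finset

lemma div_max_sub_div_max_of_zero_or_one {x y t : ℝ} (hx : x = 0 ∨ x = 1) (hy : y = 0 ∨ y = 1)
    (ht : 0 ≤ t) :
    x / max (x + y + t) 1 - y / max (x + y + t) 1 = (x - y) * (t + 1)⁻¹ := by
  rcases hx with rfl | rfl <;> rcases hy with rfl | rfl <;> norm_num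
  all_goals rw [max_eq_left (by linarith), add_comm]

lemma integrable_of_abs_le_one {Ω : Type*} [MeasurableSpace Ω] {μ : Measure Ω}
    [IsFiniteMeasure μ] {X : Ω → ℝ} (hX : Measurable X) (hX_le : ∀ ω, |X ω| ≤ 1) :
    Integrable X μ :=
  .of_bound hX.aestronglyMeasurable 1 (.of_forall hX_le)

lemma abs_le_one_of_zero_or_one {x : ℝ} (hx : x = 0 ∨ x = 1) : |x| ≤ 1 := by
  rcases hx with rfl | rfl <;> norm_num

lemma abs_div_max_one_le_one {x y : ℝ} (hx : |x| ≤ 1) : |x / max y 1| ≤ 1 := by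
  have hM : 1 ≤ max y 1 := le_max_right _ _
  rw [abs_div, abs_of_pos (one_pos.trans_le hM), div_le_one (one_pos.trans_le hM)]
  exact hx.trans hM

lemma integral_eq_measureReal_of_zero_or_one {Ω : Type*} [MeasurableSpace Ω] {μ : Measure Ω}
    {X : Ω → ℝ} (hX : Measurable X) (h01 : ∀ ω, X ω = 0 ∨ X ω = 1) :
    ∫ ω, X ω ∂μ = μ.real {ω | X ω = 1} := by
  have hX_eq : X = {ω | X ω = 1}.indicator fun _ => 1 := by
    funext ω
    rcases h01 ω with h | h <;> simp [Set.indicator, h]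
  conv_lhs => rw [hX_eq]
  rw [integral_indicator_const (1 : ℝ) (measurableSet_eq_fun hX measurable_const), smul_eq_mul,
    mul_one]

lemma ProbabilityTheory.iIndepFun.indepFun_sub_sum_compl_pair {Ω ι : Type*} [MeasurableSpace Ω]
    {μ : Measure Ω} [Fintype ι] [DecidableEq ι] {f : ι → Ω → ℝ} (hf : iIndepFun f μ)
    (hmeas : ∀ i, Measurable (f i)) (i j : ι) :
    IndepFun (fun ω => f i ω - f j ω) (fun ω => ∑ k ∈ {i, j}ᶜ, f k ω) μ := by
  have hi : i ∈ ({i, j} : Finset ι) := mem_insert_self i {j}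
  have hj : j ∈ ({i, j} : Finset ι) := mem_insert_of_mem (mem_singleton_self j)
  have h := (hf.indepFun_finset _ _ disjoint_compl_right hmeas).comp
    (φ := fun v : ({i, j} : Finset ι) → ℝ => v ⟨i, hi⟩ - v ⟨j, hj⟩)
    (ψ := fun v : (({i, j} : Finset ι)ᶜ : Finset ι) → ℝ => ∑ k, v k)
    (by fun_prop)
    (Finset.measurable_sum _ fun k _ => measurable_pi_apply k)
  convert h using 1
  · rfl
  funext ω
  exact (sum_coe_sort _ fun k => f k ω).symm

/-- Let η₁,…,ηₙ be independent Bernoulli random variables with success probabilities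
p₁ ≥ ⋯ ≥ pₙ, and S = η₁ + ⋯ + ηₙ. Then for i < j, E[ηᵢ/(S ∨ 1)] ≥ E[ηⱼ/(S ∨ 1)]. -/
theorem stmt0 {Ω : Type*} [MeasureSpace Ω] [IsProbabilityMeasure (ℙ : Measure Ω)]
    {n : ℕ} (η : Fin n → Ω → ℝ) (p : Fin n → ℝ)
    (hmeas : ∀ i, Measurable (η i))
    (hval : ∀ i ω, η i ω = 0 ∨ η i ω = 1)
    (hind : iIndepFun η ℙ)
    (hp : ∀ i, (ℙ {ω | η i ω = 1}).toReal = p i)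
    (hmono : Antitone p)
    {i j : Fin n} (hij : i < j) :
    ∫ ω, η j ω / max (∑ k, η k ω) 1 ≤ ∫ ω, η i ω / max (∑ k, η k ω) 1 := by
  set T : Ω → ℝ := fun ω => ∑ k ∈ {i, j}ᶜ, η k ω
  have hT_nonneg (ω : Ω) : 0 ≤ T ω :=
    sum_nonneg fun k _ => by rcases hval k ω with h | h <;> simp [h]
  have hsum (ω : Ω) : ∑ k, η k ω = η i ω + η j ω + T ω := by
    rw [← sum_add_sum_compl {i, j}, sum_pair hij.ne]
  have hdiff : (fun ω => η i ω / max (∑ k, η k ω) 1 - η j ω / max (∑ k, η k ω) 1)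
      = fun ω => (η i ω - η j ω) * (T ω + 1)⁻¹ := by
    funext ω
    rw [hsum]
    exact div_max_sub_div_max_of_zero_or_one (hval i ω) (hval j ω) (hT_nonneg ω)
  have hindep : IndepFun (fun ω => η i ω - η j ω) (fun ω => (T ω + 1)⁻¹) ℙ :=
    (hind.indepFun_sub_sum_compl_pair hmeas i j).comp measurable_id
      (measurable_id.add_const 1).inv
  have hη_le (k : Fin n) (ω : Ω) : |η k ω| ≤ 1 := abs_le_one_of_zero_or_one (hval k ω)
  have hη_int (k : Fin n) : Integrable (η k) ℙ := integrable_of_abs_le_one (hmeas k) (hη_le k)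
  have hintegrable (k : Fin n) : Integrable (fun ω => η k ω / max (∑ l, η l ω) 1) ℙ :=
    integrable_of_abs_le_one (by fun_prop) fun ω => abs_div_max_one_le_one (hη_le k ω)
  have hE (k : Fin n) : ∫ ω, η k ω = p k := by
    rw [integral_eq_measureReal_of_zero_or_one (hmeas k) (hval k), ← hp k, measureReal_def]
  have hfactor : ∫ ω, (η i ω - η j ω) * (T ω + 1)⁻¹ = (p i - p j) * ∫ ω, (T ω + 1)⁻¹ := by
    rw [← hE, ← hE, ← integral_sub (hη_int i) (hη_int j)]
    exact hindep.integral_mul_eq_mul_integral (by fun_prop) (by fun_prop)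
  rw [← sub_nonneg, ← integral_sub (hintegrable i) (hintegrable j), hdiff, hfactor]
  exact mul_nonneg (sub_nonneg.2 (hmono hij.le))
    (integral_nonneg fun ω => inv_nonneg.2 (by linarith [hT_nonneg ω]))
end

section
/- For ε > 0, K ≥ 1, ν₁,…,ν_K > 0 and 0 < u ≤ min_k ν_k, ∫_{Γ_u(ν)} x_k^ε dx = (V_ε/(K+ε)) · (ν̄/ν_k) · (u/ν̄)^{K/ε + 1} for each k = 1,…,K, where Γ_u(ν) = {x ∈ [0,1]^K : Σ_j ν_j x_j^ε ≤ u}, ν̄ = (ν₁⋯ν_K)^{1/K}, and V_ε = Leb{x ∈ [0,1]^K : Σ x_j^ε ≤ 1}. -/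
/-!
The diagonal scaling `x j = (u / ν j) ^ ε⁻¹ * y j` maps the unweighted region
`Δ = {y ∈ [0,1]^K : ∑ y_j^ε ≤ 1}` onto `Γ_u(ν)` (the cube is preserved because `u ≤ ν j`), has
Jacobian `∏ (u / ν j) ^ ε⁻¹ = (u / ν̄) ^ (K / ε)`, and turns `x k ^ ε` into `(u / ν k) * y k ^ ε`.
The coordinates play symmetric roles on `Δ`, so `∫_Δ y_k^ε = K⁻¹ ∫_Δ ∑ y_j^ε`, and by the
layer-cake formula, since `{y ∈ Δ : ∑ y_j^ε ≤ t}` is `Δ` scaled by `t ^ ε⁻¹` and so has volume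
`t ^ (K / ε) V_ε`, `∫_Δ ∑ y_j^ε = ∫₀¹ (1 - t ^ (K / ε)) V_ε dt = K V_ε / (K + ε)`.
-/

open MeasureTheory Set

lemma setIntegral_eq_integral_Ioc_measureReal_lt {α : Type*} [MeasurableSpace α] {μ : Measure α}
    {s : Set α} (hs : MeasurableSet s) {f : α → ℝ} {M : ℝ} (hf : IntegrableOn f s μ)
    (hf_nonneg : ∀ x ∈ s, 0 ≤ f x) (hf_le : ∀ x ∈ s, f x ≤ M) :
    ∫ x in s, f x ∂μ = ∫ t in Ioc 0 M, μ.real ({x | t < f x} ∩ s) := by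
  have hrestr t : (μ.restrict s).real {x | t < f x} = μ.real ({x | t < f x} ∩ s) := by
    simp only [measureReal_def, Measure.restrict_apply' hs]
  rw [hf.integral_eq_integral_meas_lt ((ae_restrict_iff' hs).2 (ae_of_all _ hf_nonneg)),
    ← setIntegral_eq_of_subset_of_ae_sdiff_eq_zero nullMeasurableSet_Ioi Ioc_subset_Ioi_self ?_]
  · simp only [hrestr]
  refine ae_of_all _ fun t ht => ?_
  have hMt : M < t := (by simpa using ht : 0 < t ∧ M < t).2
  have hempty : {x | t < f x} ∩ s = ∅ :=
    eq_empty_of_forall_notMem fun x hx => (hf_le x hx.2).not_gt (hMt.trans hx.1)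
  rw [hempty, measureReal_empty]

section

variable {ι : Type*} [Fintype ι]

/-- The region `Γ_u(ν)` of the paper; `V_ε` is the volume of `cubeSublevel ε 1 1`. -/
def cubeSublevel (ε : ℝ) (ν : ι → ℝ) (u : ℝ) : Set (ι → ℝ) :=
  {x | (∀ j, x j ∈ Icc (0:ℝ) 1) ∧ ∑ j, ν j * x j ^ ε ≤ u}

lemma cubeSublevel_eq_Icc_inter (ε : ℝ) (ν : ι → ℝ) (u : ℝ) :
    cubeSublevel ε ν u = Icc 0 1 ∩ {x | ∑ j, ν j * x j ^ ε ≤ u} := by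
  ext x; simp [cubeSublevel, Pi.le_def, forall_and]

lemma measurableSet_cubeSublevel (ε : ℝ) (ν : ι → ℝ) (u : ℝ) :
    MeasurableSet (cubeSublevel ε ν u) := by
  unfold cubeSublevel; measurability

lemma isCompact_cubeSublevel {ε : ℝ} (hε : 0 ≤ ε) (ν : ι → ℝ) (u : ℝ) :
    IsCompact (cubeSublevel ε ν u) := by
  rw [cubeSublevel_eq_Icc_inter]
  exact isCompact_Icc.inter_right <| isClosed_le (by fun_prop (disch := exact hε)) continuous_const

lemma setIntegral_image_mul_left [DecidableEq ι] {c : ι → ℝ} (hc : ∀ j, c j ≠ 0) {s : Set (ι → ℝ)}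
    (hs : MeasurableSet s) (g : (ι → ℝ) → ℝ) :
    ∫ x in (c * ·) '' s, g x = |∏ j, c j| * ∫ y in s, g (c * y) := by
  let L : (ι → ℝ) →L[ℝ] (ι → ℝ) :=
    LinearMap.toContinuousLinearMap (Matrix.toLin' (Matrix.diagonal c))
  have hL : ⇑L = (c * ·) := by
    funext y j; simp [L, Matrix.mulVec_diagonal]
  have hdet : L.det = ∏ j, c j := by
    rw [ContinuousLinearMap.det, LinearMap.coe_toContinuousLinearMap, LinearMap.det_toLin',
      Matrix.det_diagonal]
  have hinj : Function.Injective (c * ·) := fun y z h => funext fun j =>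
    mul_left_cancel₀ (hc j) (congrFun h j)
  rw [← hL, integral_image_eq_integral_abs_det_fderiv_smul volume hs
      (fun x _ => L.hasFDerivAt.hasFDerivWithinAt) (hL ▸ hinj).injOn g, hdet, hL]
  simp only [smul_eq_mul, integral_const_mul]

lemma image_mul_cubeSublevel_one {ε : ℝ} (hε : 0 < ε) {ν : ι → ℝ} (hν : ∀ j, 0 < ν j) {u : ℝ}
    (hu : 0 < u) (huν : ∀ j, u ≤ ν j) :
    ((fun j => (u / ν j) ^ ε⁻¹) * ·) '' cubeSublevel ε 1 1 = cubeSublevel ε ν u := by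
  set c : ι → ℝ := fun j => (u / ν j) ^ ε⁻¹
  have hq j : 0 < u / ν j := div_pos hu (hν j)
  have hc_pos j : 0 < c j := Real.rpow_pos_of_pos (hq j) _
  have hc_le_one j : c j ≤ 1 :=
    Real.rpow_le_one (hq j).le ((div_le_one (hν j)).2 (huν j)) (inv_nonneg.2 hε.le)
  have hc_rpow j : c j ^ ε = u / ν j := Real.rpow_inv_rpow (hq j).le hε.ne'
  ext x
  constructor
  · rintro ⟨y, ⟨hy, hy_sum⟩, rfl⟩
    have hterm j : ν j * (c j * y j) ^ ε = u * y j ^ ε := by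
      rw [Real.mul_rpow (hc_pos j).le (hy j).1, hc_rpow, ← mul_assoc, mul_div_cancel₀ _ (hν j).ne']
    refine ⟨fun j => ⟨mul_nonneg (hc_pos j).le (hy j).1,
      mul_le_one₀ (hc_le_one j) (hy j).1 (hy j).2⟩, ?_⟩
    simp only [Pi.mul_apply, hterm, ← Finset.mul_sum]
    simp only [Pi.one_apply, one_mul] at hy_sum
    exact mul_le_of_le_one_right hu.le hy_sum
  · rintro ⟨hx, hx_sum⟩
    have hy_nonneg j : 0 ≤ x j / c j := div_nonneg (hx j).1 (hc_pos j).le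
    have hterm j : (x j / c j) ^ ε = ν j * x j ^ ε / u := by
      rw [Real.div_rpow (hx j).1 (hc_pos j).le, hc_rpow, div_div_eq_mul_div, mul_comm]
    have hsum : ∑ j, (x j / c j) ^ ε ≤ 1 := by
      rwa [Finset.sum_congr rfl fun j _ => hterm j, ← Finset.sum_div, div_le_one hu]
    refine ⟨x / c, ⟨fun j => ⟨hy_nonneg j, ?_⟩, ?_⟩, ?_⟩
    · change x j / c j ≤ 1
      rw [← Real.rpow_le_rpow_iff (hy_nonneg j) zero_le_one hε, Real.one_rpow]
      exact (Finset.single_le_sum (fun i _ => Real.rpow_nonneg (hy_nonneg i) ε)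
        (Finset.mem_univ j)).trans hsum
    · simpa using hsum
    · funext j; exact mul_div_cancel₀ _ (hc_pos j).ne'

lemma setIntegral_cubeSublevel {ε : ℝ} (hε : 0 < ε) {ν : ι → ℝ} (hν : ∀ j, 0 < ν j) {u : ℝ}
    (hu : 0 < u) (huν : ∀ j, u ≤ ν j) (g : (ι → ℝ) → ℝ) :
    ∫ x in cubeSublevel ε ν u, g x =
      (∏ j, (u / ν j) ^ ε⁻¹) * ∫ y in cubeSublevel ε 1 1, g ((fun j => (u / ν j) ^ ε⁻¹) * y) := by
  classical
  have hc_pos j : 0 < (u / ν j) ^ ε⁻¹ := Real.rpow_pos_of_pos (div_pos hu (hν j)) _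
  rw [← image_mul_cubeSublevel_one hε hν hu huν,
    setIntegral_image_mul_left (fun j => (hc_pos j).ne') (measurableSet_cubeSublevel _ _ _),
    abs_of_pos (Finset.prod_pos fun j _ => hc_pos j)]

lemma measureReal_cubeSublevel_one {ε : ℝ} (hε : 0 < ε) {t : ℝ} (ht : 0 < t) (ht1 : t ≤ 1) :
    volume.real (cubeSublevel ε (1 : ι → ℝ) t) =
      t ^ (Fintype.card ι / ε) * volume.real (cubeSublevel ε (1 : ι → ℝ) 1) := by
  have h := setIntegral_cubeSublevel hε (ν := (1 : ι → ℝ)) (fun _ => one_pos) ht (fun _ => ht1)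
    fun _ => (1 : ℝ)
  simp only [setIntegral_const, smul_eq_mul, mul_one, Pi.one_apply, div_one, Finset.prod_const,
    Finset.card_univ] at h
  rw [h, ← Real.rpow_natCast, ← Real.rpow_mul ht.le, div_eq_inv_mul]

lemma integral_sum_rpow_cubeSublevel_one {ε : ℝ} (hε : 0 < ε) :
    ∫ y in cubeSublevel ε (1 : ι → ℝ) 1, ∑ j, y j ^ ε =
      Fintype.card ι / (Fintype.card ι + ε) * volume.real (cubeSublevel ε (1 : ι → ℝ) 1) := by
  set Δ := cubeSublevel ε (1 : ι → ℝ) 1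
  set n : ℝ := (Fintype.card ι : ℝ)
  have hΔ y : y ∈ Δ ↔ (∀ j, y j ∈ Icc (0:ℝ) 1) ∧ ∑ j, y j ^ ε ≤ 1 := by
    simp [Δ, cubeSublevel]
  have hlevel t (ht : t ∈ Ioc (0:ℝ) 1) :
      volume.real ({y | t < ∑ j, y j ^ ε} ∩ Δ) = volume.real Δ - t ^ (n / ε) * volume.real Δ := by
    have hsub : cubeSublevel ε 1 t ⊆ Δ := fun y hy => ⟨hy.1, hy.2.trans ht.2⟩
    have hdiff : {y | t < ∑ j, y j ^ ε} ∩ Δ = Δ \ cubeSublevel ε 1 t := by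
      ext y
      simp only [mem_inter_iff, mem_sdiff, mem_ofPred_eq, hΔ, cubeSublevel, Pi.one_apply, one_mul,
        not_and, not_le]
      tauto
    rw [hdiff, measureReal_sdiff hsub (measurableSet_cubeSublevel _ _ _)
      (isCompact_cubeSublevel hε.le _ _).measure_lt_top.ne,
      measureReal_cubeSublevel_one hε ht.1 ht.2]
  have hint : IntegrableOn (fun y : ι → ℝ => ∑ j, y j ^ ε) Δ :=
    ContinuousOn.integrableOn_compact (isCompact_cubeSublevel hε.le _ _)
      (by fun_prop (disch := exact hε.le))
  have hexp : -1 < n / ε := by linarith [show 0 ≤ n / ε by positivity]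
  rw [setIntegral_eq_integral_Ioc_measureReal_lt (measurableSet_cubeSublevel _ _ _) hint
    (fun y hy => Finset.sum_nonneg fun j _ => Real.rpow_nonneg ((hy.1 j).1) ε)
    (fun y hy => ((hΔ y).1 hy).2), setIntegral_congr_fun measurableSet_Ioc hlevel,
    ← intervalIntegral.integral_of_le zero_le_one, intervalIntegral.integral_sub
    intervalIntegrable_const ((intervalIntegral.intervalIntegrable_rpow' hexp).mul_const _),
    intervalIntegral.integral_mul_const, integral_rpow (Or.inl hexp)]
  have hexp_ne : n / ε + 1 ≠ 0 := by positivity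
  have hnε : n + ε ≠ 0 := by positivity
  simp only [Real.one_rpow, Real.zero_rpow hexp_ne, intervalIntegral.integral_const, smul_eq_mul]
  field_simp
  ring

lemma setIntegral_comp_apply_cubeSublevel_one [DecidableEq ι] (ε t : ℝ) (g : ℝ → ℝ) (i j : ι) :
    ∫ y in cubeSublevel ε (1 : ι → ℝ) t, g (y i) =
      ∫ y in cubeSublevel ε (1 : ι → ℝ) t, g (y j) := by
  let e : (ι → ℝ) ≃ᵐ (ι → ℝ) :=
    MeasurableEquiv.arrowCongr' (Equiv.swap i j) (MeasurableEquiv.refl ℝ)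
  have he x k : e x k = x (Equiv.swap i j k) := by
    simp [e, MeasurableEquiv.arrowCongr', Equiv.arrowCongr', Equiv.arrowCongr]
  have hpre : e ⁻¹' cubeSublevel ε 1 t = cubeSublevel ε 1 t := by
    ext x
    simp only [mem_preimage, cubeSublevel, mem_ofPred_eq, he, Pi.one_apply, one_mul]
    exact and_congr ((Equiv.swap i j).forall_congr_right (q := fun k => x k ∈ Icc 0 1))
      (by rw [Equiv.sum_comp (Equiv.swap i j) fun k => x k ^ ε])
  have h : ∫ x in e ⁻¹' cubeSublevel ε 1 t, g (e x j) = ∫ y in cubeSublevel ε 1 t, g (y j) :=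
    (volume_preserving_arrowCongr' (Equiv.swap i j) (MeasurableEquiv.refl ℝ)
      (MeasurePreserving.id _)).setIntegral_preimage_emb e.measurableEmbedding
      (fun y => g (y j)) _
  simpa only [hpre, he, Equiv.swap_apply_right] using h

lemma setIntegral_rpow_apply_cubeSublevel_one {ε : ℝ} (hε : 0 < ε) (i : ι) :
    ∫ y in cubeSublevel ε (1 : ι → ℝ) 1, y i ^ ε =
      volume.real (cubeSublevel ε (1 : ι → ℝ) 1) / (Fintype.card ι + ε) := by
  classical
  have hcard : (Fintype.card ι : ℝ) ≠ 0 := Nat.cast_ne_zero.2 (Fintype.card_pos_iff.2 ⟨i⟩).ne'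
  have hsum := integral_sum_rpow_cubeSublevel_one (ι := ι) hε
  rw [integral_finsetSum _ fun j _ => ContinuousOn.integrableOn_compact
      (isCompact_cubeSublevel hε.le _ _) (by fun_prop (disch := exact hε.le))] at hsum
  simp only [setIntegral_comp_apply_cubeSublevel_one ε 1 (· ^ ε) _ i, Finset.sum_const,
    Finset.card_univ, nsmul_eq_mul] at hsum
  field_simp at hsum ⊢
  linear_combination hsum

lemma prod_rpow_div_eq_rpow_div_geomMean {ν : ι → ℝ} (hν : ∀ j, 0 < ν j) {u : ℝ} (hu : 0 ≤ u)
    (hcard : (Fintype.card ι : ℝ) ≠ 0) (ε : ℝ) :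
    ∏ j, (u / ν j) ^ ε⁻¹ = (u / (∏ j, ν j) ^ ((1:ℝ) / Fintype.card ι)) ^ (Fintype.card ι / ε) := by
  have hprod : 0 < ∏ j, ν j := Finset.prod_pos fun j _ => hν j
  have hmean : ((∏ j, ν j) ^ ((1:ℝ) / Fintype.card ι)) ^ (Fintype.card ι : ℝ) = ∏ j, ν j := by
    rw [one_div, Real.rpow_inv_rpow hprod.le hcard]
  rw [Real.finsetProd_rpow _ _ fun j _ => div_nonneg hu (hν j).le, Finset.prod_div_distrib,
    Finset.prod_const, Finset.card_univ, div_eq_mul_inv (Fintype.card ι : ℝ),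
    Real.rpow_mul (div_nonneg hu (by positivity)), Real.div_rpow hu (by positivity), hmean,
    Real.rpow_natCast]

end

theorem stmt4_general (K : ℕ) (ε : ℝ) (hε : 0 < ε)
    (ν : Fin K → ℝ) (hν : ∀ k, 0 < ν k) (u : ℝ) (hu : 0 < u) (humin : ∀ k, u ≤ ν k)
    (k : Fin K) :
    (∫ x in {x : Fin K → ℝ | (∀ j, x j ∈ Set.Icc (0:ℝ) 1) ∧ ∑ j, ν j * x j ^ ε ≤ u},
        x k ^ ε)
      = (volume {x : Fin K → ℝ | (∀ j, x j ∈ Set.Icc (0:ℝ) 1) ∧ ∑ j, x j ^ ε ≤ 1}).toReal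
          / (K + ε) * ((∏ j, ν j) ^ ((1:ℝ)/K) / ν k)
          * (u / (∏ j, ν j) ^ ((1:ℝ)/K)) ^ ((K:ℝ)/ε + 1) := by
  have hK : (K : ℝ) ≠ 0 := Nat.cast_ne_zero.2 k.pos.ne'
  have hΔ : {x : Fin K → ℝ | (∀ j, x j ∈ Icc (0:ℝ) 1) ∧ ∑ j, x j ^ ε ≤ 1} = cubeSublevel ε 1 1 := by
    simp [cubeSublevel]
  have hcoord y (hy : y ∈ cubeSublevel ε 1 1) :
      ((fun j => (u / ν j) ^ ε⁻¹) * y) k ^ ε = u / ν k * y k ^ ε := by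
    have hq : 0 ≤ u / ν k := (div_pos hu (hν k)).le
    rw [Pi.mul_apply, Real.mul_rpow (Real.rpow_nonneg hq _) (hy.1 k).1,
      Real.rpow_inv_rpow hq hε.ne']
  change ∫ x in cubeSublevel ε ν u, x k ^ ε = _
  rw [hΔ, setIntegral_cubeSublevel hε hν hu humin,
    setIntegral_congr_fun (measurableSet_cubeSublevel _ _ _) hcoord, integral_const_mul,
    setIntegral_rpow_apply_cubeSublevel_one hε k,
    prod_rpow_div_eq_rpow_div_geomMean hν hu.le (by simpa using hK), Fintype.card_fin,
    ← measureReal_def]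
  have hmean : 0 < (∏ j, ν j) ^ ((1:ℝ) / K) := by
    have := Finset.prod_pos fun j (_ : j ∈ Finset.univ) => hν j
    positivity
  rw [Real.rpow_add_one (div_pos hu hmean).ne']
  field_simp

/-- For 0 < u ≤ min ν_k and each k,
∫_{Γ_u(ν)} x_k^ε dx = (V_ε/(K+ε)) (ν̄/ν_k) (u/ν̄)^{K/ε+1}. -/
theorem stmt4 (K : ℕ) (hK : 1 ≤ K) (ε : ℝ) (hε : 0 < ε)
    (ν : Fin K → ℝ) (hν : ∀ k, 0 < ν k) (u : ℝ) (hu : 0 < u) (humin : ∀ k, u ≤ ν k)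
    (k : Fin K) :
    (∫ x in {x : Fin K → ℝ | (∀ j, x j ∈ Set.Icc (0:ℝ) 1) ∧ ∑ j, ν j * x j ^ ε ≤ u},
        x k ^ ε)
      = (volume {x : Fin K → ℝ | (∀ j, x j ∈ Set.Icc (0:ℝ) 1) ∧ ∑ j, x j ^ ε ≤ 1}).toReal
          / (K + ε) * ((∏ j, ν j) ^ ((1:ℝ)/K) / ν k)
          * (u / (∏ j, ν j) ^ ((1:ℝ)/K)) ^ ((K:ℝ)/ε + 1) :=
  stmt4_general K ε hε ν hν u hu humin k
end

section
/- For ε > 0 and K ≥ 1, ∫_{[0,1]^K} (Σ_k z_k^ε) · 1{Σ_k z_k^ε ≤ 1} dz = V_ε · K/(K+ε), where V_ε = Leb{z ∈ [0,1]^K : Σ z_k^ε ≤ 1}. -/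
/-!
By the layer-cake formula, `∫_A f = ∫₀¹ |{z ∈ A : f z > t}| dt` for `f z = ∑ k, z k ^ ε` and
`A = {z ≥ 0 : f z ≤ 1}` (on which every `z k ≤ 1`, so `A` lies in the unit cube). Since `f` is
homogeneous of degree `ε`, `{z ≥ 0 : f z ≤ t} = t ^ (1/ε) • A`, whose volume is `t ^ (K/ε) |A|`.
Hence the integral is `|A| ∫₀¹ (1 - t ^ (K/ε)) dt = |A| K / (K + ε)`.
-/

open MeasureTheory Set Pointwise

section LayerCake

variable {α : Type*} [MeasurableSpace α] {μ : Measure α} [IsFiniteMeasure μ]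

theorem integral_eq_of_measureReal_le_eq_rpow {f : α → ℝ} {p : ℝ} (hp : 0 ≤ p)
    (hf : AEMeasurable f μ) (hf0 : 0 ≤ᵐ[μ] f) (hf1 : ∀ᵐ x ∂μ, f x ≤ 1)
    (hdist : ∀ t ∈ Ioc (0 : ℝ) 1, μ.real {x | f x ≤ t} = t ^ p * μ.real univ) :
    ∫ x, f x ∂μ = μ.real univ * p / (p + 1) := by
  have hint : Integrable f μ := by
    refine .of_bound hf.aestronglyMeasurable 1 ?_
    filter_upwards [hf0, hf1] with x h0 h1
    rwa [Real.norm_of_nonneg h0]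
  have htail : ∀ t ∈ Ioi (0 : ℝ) \ Ioc 0 1, μ.real {x | t < f x} = 0 := by
    rintro t ⟨ht0, hnot⟩
    have ht1 : 1 < t := not_le.1 fun h => hnot ⟨ht0, h⟩
    exact (measureReal_eq_zero_iff).2 <|
      measure_mono_null (fun x hx => not_le.2 (ht1.trans hx)) (ae_iff.1 hf1)
  have hbody : ∀ t ∈ Ioc (0 : ℝ) 1,
      μ.real {x | t < f x} = μ.real univ - t ^ p * μ.real univ := by
    intro t ht
    rw [← hdist t ht, ← measureReal_compl₀ (nullMeasurableSet_le hf aemeasurable_const)]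
    simp only [compl_ofPred, not_le]
  rw [hint.integral_eq_integral_meas_lt hf0,
    setIntegral_eq_of_subset_of_ae_sdiff_eq_zero measurableSet_Ioi.nullMeasurableSet
      Ioc_subset_Ioi_self (.of_forall htail),
    setIntegral_congr_fun measurableSet_Ioc hbody, ← intervalIntegral.integral_of_le zero_le_one,
    intervalIntegral.integral_sub intervalIntegrable_const
      ((intervalIntegral.intervalIntegrable_rpow' (by linarith)).mul_const _),
    intervalIntegral.integral_const, intervalIntegral.integral_mul_const,
    integral_rpow (.inl (by linarith)), Real.one_rpow, Real.zero_rpow (by linarith)]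
  field_simp
  ring

end LayerCake

section Orthant

def orthantSublevel (ι : Type*) [Fintype ι] (ε t : ℝ) : Set (ι → ℝ) :=
  {z | (∀ k, 0 ≤ z k) ∧ ∑ k, z k ^ ε ≤ t}

variable {ι : Type*} [Fintype ι] {ε : ℝ}

theorem measurableSet_orthantSublevel {t : ℝ} : MeasurableSet (orthantSublevel ι ε t) := by
  unfold orthantSublevel
  measurability

theorem orthantSublevel_mono {s t : ℝ} (hst : s ≤ t) :
    orthantSublevel ι ε s ⊆ orthantSublevel ι ε t :=
  fun _ hz => ⟨hz.1, hz.2.trans hst⟩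

theorem orthantSublevel_subset_Icc (hε : 0 < ε) {t : ℝ} (ht : t ≤ 1) :
    orthantSublevel ι ε t ⊆ Icc 0 1 := by
  refine fun z ⟨hz0, hzt⟩ => ⟨hz0, fun k => ?_⟩
  have hk : z k ^ ε ≤ 1 := (Finset.single_le_sum (fun j _ => Real.rpow_nonneg (hz0 j) ε)
    (Finset.mem_univ k)).trans (hzt.trans ht)
  exact not_lt.1 fun h => (Real.one_lt_rpow h hε).not_ge hk

theorem orthantSublevel_eq_smul (hε : 0 < ε) {t : ℝ} (ht : 0 < t) :
    orthantSublevel ι ε t = t ^ ε⁻¹ • orthantSublevel ι ε 1 := by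
  set r := t ^ ε⁻¹
  have hr : 0 < r := Real.rpow_pos_of_pos ht _
  have hsum : ∀ z : ι → ℝ, (∀ k, 0 ≤ z k) → ∑ k, (r⁻¹ * z k) ^ ε = t⁻¹ * ∑ k, z k ^ ε := by
    intro z hz
    rw [Finset.mul_sum]
    refine Finset.sum_congr rfl fun k _ => ?_
    rw [Real.mul_rpow (inv_nonneg.2 hr.le) (hz k), Real.inv_rpow hr.le,
      Real.rpow_inv_rpow ht.le hε.ne']
  ext z
  rw [mem_smul_set_iff_inv_smul_mem₀ hr.ne']
  simp only [orthantSublevel, mem_ofPred_eq, Pi.smul_apply, smul_eq_mul,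
    mul_nonneg_iff_of_pos_left (inv_pos.2 hr)]
  refine and_congr_right fun hz => ?_
  rw [hsum z hz, inv_mul_le_one₀ ht]

theorem volume_orthantSublevel (hε : 0 < ε) {t : ℝ} (ht : 0 < t) :
    volume.real (orthantSublevel ι ε t) =
      t ^ (Fintype.card ι / ε) * volume.real (orthantSublevel ι ε 1) := by
  rw [orthantSublevel_eq_smul hε ht, measureReal_def, Measure.addHaar_smul_of_nonneg _
    (Real.rpow_nonneg ht.le _), ENNReal.toReal_mul, ENNReal.toReal_ofReal (by positivity),
    Module.finrank_fintype_fun_eq_card, ← Real.rpow_natCast, ← Real.rpow_mul ht.le,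
    div_eq_inv_mul, measureReal_def]

theorem orthantSublevel_eq_Icc_inter (hε : 0 < ε) {t : ℝ} (ht : t ≤ 1) :
    orthantSublevel ι ε t = {z | (∀ k, z k ∈ Icc (0 : ℝ) 1) ∧ ∑ k, z k ^ ε ≤ t} :=
  Subset.antisymm
    (fun _ hz => ⟨fun k => ⟨hz.1 k, (orthantSublevel_subset_Icc hε ht hz).2 k⟩, hz.2⟩)
    fun _ hz => ⟨fun k => (hz.1 k).1, hz.2⟩

theorem setOf_sum_rpow_le_inter_orthantSublevel {s t : ℝ} (hst : s ≤ t) :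
    {z : ι → ℝ | ∑ k, z k ^ ε ≤ s} ∩ orthantSublevel ι ε t = orthantSublevel ι ε s := by
  ext z
  exact ⟨fun ⟨hs, hz⟩ => ⟨hz.1, hs⟩, fun hz => ⟨hz.2, orthantSublevel_mono hst hz⟩⟩

theorem integral_sum_rpow_orthantSublevel_one (hε : 0 < ε) :
    ∫ z in orthantSublevel ι ε 1, ∑ k, z k ^ ε =
      volume.real (orthantSublevel ι ε 1) * Fintype.card ι / (Fintype.card ι + ε) := by
  have hA : MeasurableSet (orthantSublevel ι ε 1) := measurableSet_orthantSublevel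
  have : IsFiniteMeasure (volume.restrict (orthantSublevel ι ε 1)) :=
    isFiniteMeasure_restrict.2 (measure_mono (orthantSublevel_subset_Icc hε le_rfl)
      |>.trans_lt measure_Icc_lt_top).ne
  have hdist : ∀ t ∈ Ioc (0 : ℝ) 1,
      (volume.restrict (orthantSublevel ι ε 1)).real {z | ∑ k, z k ^ ε ≤ t} =
        t ^ (Fintype.card ι / ε) * (volume.restrict (orthantSublevel ι ε 1)).real univ := by
    intro t ht
    rw [measureReal_restrict_apply' hA, measureReal_restrict_apply_univ,
      setOf_sum_rpow_le_inter_orthantSublevel ht.2, volume_orthantSublevel hε ht.1]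
  rw [integral_eq_of_measureReal_le_eq_rpow (by positivity)
    (Finset.measurable_sum _ fun k _ => (measurable_pi_apply k).pow_const ε).aemeasurable
    (by filter_upwards [ae_restrict_mem hA] with z hz
        using Finset.sum_nonneg fun k _ => Real.rpow_nonneg (hz.1 k) ε)
    (by filter_upwards [ae_restrict_mem hA] with z hz using hz.2) hdist,
    measureReal_restrict_apply_univ]
  field_simp

end Orthant

theorem stmt5_general (K : ℕ) (ε : ℝ) (hε : 0 < ε) :
    (∫ z in {z : Fin K → ℝ | (∀ k, z k ∈ Set.Icc (0:ℝ) 1) ∧ ∑ k, z k ^ ε ≤ 1},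
        ∑ k, z k ^ ε)
      = (volume {z : Fin K → ℝ | (∀ k, z k ∈ Set.Icc (0:ℝ) 1) ∧ ∑ k, z k ^ ε ≤ 1}).toReal
          * K / (K + ε) := by
  rw [← orthantSublevel_eq_Icc_inter hε le_rfl, integral_sum_rpow_orthantSublevel_one hε,
    Fintype.card_fin, measureReal_def]

/-- ∫_{[0,1]^K} (Σ z_k^ε) 1{Σ z_k^ε ≤ 1} dz = V_ε K/(K+ε). -/
theorem stmt5 (K : ℕ) (hK : 1 ≤ K) (ε : ℝ) (hε : 0 < ε) :
    (∫ z in {z : Fin K → ℝ | (∀ k, z k ∈ Set.Icc (0:ℝ) 1) ∧ ∑ k, z k ^ ε ≤ 1},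
        ∑ k, z k ^ ε)
      = (volume {z : Fin K → ℝ | (∀ k, z k ∈ Set.Icc (0:ℝ) 1) ∧ ∑ k, z k ^ ε ≤ 1}).toReal
          * K / (K + ε) :=
  stmt5_general K ε hε
end

section
/- Let ε > 0, and let ν₁, ν₂ > 0 with ν₂ ≥ ν₁. For u with ν₂ ≤ u < ν₁ + ν₂, the Lebesgue measure of {(x,y) ∈ [0,1]² : ν₁x^ε + ν₂y^ε ≤ u} equals ((u-ν₂)/ν₁)^{1/ε} + (Γ(1/ε)²/(2εΓ(2/ε))) · (u²/(ν₁ν₂))^{1/ε} · [F(ν₁/u; 1/ε, 1+1/ε) - F(1 - ν₂/u; 1/ε, 1+1/ε)], where F(·; a, b) denotes the regularized incomplete Beta distribution function with parameters a, b. -/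
open MeasureTheory

/-- Regularized incomplete Beta distribution function
F(x; a, b) = (1/B(a,b)) ∫₀^{(min(x,1))∨0} t^{a-1}(1-t)^{b-1} dt. -/
noncomputable def betaCDF (a b x : ℝ) : ℝ :=
  (Real.Gamma (a + b) / (Real.Gamma a * Real.Gamma b)) *
    ∫ t in Set.Ioc (0:ℝ) (max (min x 1) 0), t ^ (a - 1) * (1 - t) ^ (b - 1)

/-!
For fixed `x ∈ [0, 1]` the slice of the region is `0 ≤ y ≤ min 1 (m x)` with
`m x = ((u - ν₁ x^ε) / ν₂)^(1/ε)`, and `m x ≥ 1` exactly when `x ≤ x₀ = ((u - ν₂) / ν₁)^(1/ε)`.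
Hence the area is `x₀ + ∫_{x₀}^1 m`. The substitutions `y = x^ε` and `t = ν₁ y / u` turn the
integral into `(1/ε) (u² / (ν₁ ν₂))^(1/ε) ∫_{1 - ν₂/u}^{ν₁/u} t^(1/ε - 1) (1 - t)^(1/ε) dt`,
an increment of the incomplete Beta function with parameters `1/ε, 1 + 1/ε`, and the constant
comes from `B(a, 1 + a) = Γ(a)² / (2 Γ(2a))`.
-/

open Set

theorem volume_region_between_cc_eq_integral {α : Type*} [MeasurableSpace α] {μ : Measure α}
    {f g : α → ℝ} {s : Set α}
    (f_int : IntegrableOn f s μ) (g_int : IntegrableOn g s μ) (hs : MeasurableSet s)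
    (hf : Measurable f) (hg : Measurable g) (hfg : ∀ x ∈ s, f x ≤ g x) :
    μ.prod volume {p : α × ℝ | p.1 ∈ s ∧ p.2 ∈ Icc (f p.1) (g p.1)} =
      ENNReal.ofReal (∫ x in s, (g - f) x ∂μ) := by
  set R := {p : α × ℝ | p.1 ∈ s ∧ p.2 ∈ Icc (f p.1) (g p.1)}
  have hslice : ∀ x, volume (Prod.mk x ⁻¹' R) = s.indicator (fun x => .ofReal ((g - f) x)) x := by
    intro x
    by_cases hx : x ∈ s
    · have hRx : Prod.mk x ⁻¹' R = Icc (f x) (g x) := by ext; simp [R, hx]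
      rw [hRx, Real.volume_Icc, indicator_of_mem hx, Pi.sub_apply]
    · simp [R, hx, Set.preimage]
  rw [Measure.prod_apply (measurableSet_region_between_cc hf hg hs), lintegral_congr hslice,
    lintegral_indicator hs, ofReal_integral_eq_lintegral_ofReal (g_int.sub f_int)]
  exact (ae_restrict_iff' hs).mpr (.of_forall fun x hx => sub_nonneg.mpr (hfg x hx))

theorem intervalIntegral.integral_min_eq_of_le_of_le {f : ℝ → ℝ} {a b c k : ℝ}
    (hac : a ≤ c) (hcb : c ≤ b) (hf : IntervalIntegrable f volume c b)
    (hle : ∀ x ∈ Icc a c, k ≤ f x) (hge : ∀ x ∈ Icc c b, f x ≤ k) :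
    ∫ x in a..b, min k (f x) = k * (c - a) + ∫ x in c..b, f x := by
  have hleft : EqOn (fun x => min k (f x)) (fun _ => k) (uIcc a c) := fun x hx =>
    min_eq_left (hle x (uIcc_of_le hac ▸ hx))
  have hright : EqOn (fun x => min k (f x)) f (uIcc c b) := fun x hx =>
    min_eq_right (hge x (uIcc_of_le hcb ▸ hx))
  rw [← intervalIntegral.integral_add_adjacent_intervals
      ((intervalIntegrable_const (c := k)).congr (hleft.symm.mono Ioc_subset_Icc_self))
      (hf.congr (hright.symm.mono Ioc_subset_Icc_self)),
    intervalIntegral.integral_congr hleft, intervalIntegral.integral_congr hright,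
    intervalIntegral.integral_const, smul_eq_mul, mul_comm]

section PowerSubstitution

variable {E : Type*} [NormedAddCommGroup E] [NormedSpace ℝ E]

theorem intervalIntegral.integral_comp_rpow {ε a b : ℝ} (hε : 0 < ε) (ha : 0 ≤ a) (hab : a ≤ b)
    (g : ℝ → E) :
    ∫ x in a..b, g (x ^ ε) = ε⁻¹ • ∫ y in a ^ ε..b ^ ε, y ^ (ε⁻¹ - 1) • g y := by
  have hmono : StrictMonoOn (fun x : ℝ => x ^ ε) (Icc a b) := fun x hx y _ hxy =>
    Real.rpow_lt_rpow (ha.trans hx.1) hxy hε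
  have himage : (fun x : ℝ => x ^ ε) '' Ioo a b = Ioo (a ^ ε) (b ^ ε) :=
    (Real.continuous_rpow_const hε.le).continuousOn.image_Ioo_of_strictMonoOn hab hmono
  have hderiv : ∀ x ∈ Ioo a b,
      HasDerivWithinAt (fun x : ℝ => x ^ ε) (ε * x ^ (ε - 1)) (Ioo a b) x := fun x hx =>
    (Real.hasDerivAt_rpow_const (Or.inl (ha.trans_lt hx.1).ne')).hasDerivWithinAt
  have hjac : ∀ x ∈ Ioo a b,
      |ε * x ^ (ε - 1)| • (x ^ ε) ^ (ε⁻¹ - 1) • g (x ^ ε) = ε • g (x ^ ε) := by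
    intro x hx
    have hx0 : 0 < x := ha.trans_lt hx.1
    rw [smul_smul, ← Real.rpow_mul hx0.le, abs_of_pos (by positivity), mul_assoc,
      ← Real.rpow_add hx0, mul_sub, mul_inv_cancel₀ hε.ne', mul_one,
      show ε - 1 + (1 - ε) = 0 by ring, Real.rpow_zero, mul_one]
  rw [intervalIntegral.integral_of_le hab, integral_Ioc_eq_integral_Ioo,
    intervalIntegral.integral_of_le (Real.rpow_le_rpow ha hab hε.le),
    integral_Ioc_eq_integral_Ioo, ← himage,
    integral_image_eq_integral_abs_deriv_smul measurableSet_Ioo hderiv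
      (hmono.mono Ioo_subset_Icc_self).injOn,
    setIntegral_congr_fun measurableSet_Ioo hjac, MeasureTheory.integral_smul, smul_smul,
    inv_mul_cancel₀ hε.ne', one_smul]

theorem intervalIntegral.integral_rpow_smul_comp_mul_left {p c α β : ℝ} (hc : 0 < c)
    (hα : 0 ≤ α) (hβ : 0 ≤ β) (g : ℝ → E) :
    ∫ y in α..β, y ^ p • g (c * y) = (c ^ (p + 1))⁻¹ • ∫ t in c * α..c * β, t ^ p • g t := by
  have hpoint : EqOn (fun y => y ^ p • g (c * y))
      (fun y => (c ^ p)⁻¹ • ((c * y) ^ p • g (c * y))) (uIcc α β) := by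
    intro y hy
    have hy0 : 0 ≤ y := le_trans (le_min hα hβ) hy.1
    simp only [Real.mul_rpow hc.le hy0, smul_smul, ← mul_assoc,
      inv_mul_cancel₀ (Real.rpow_pos_of_pos hc p).ne', one_mul]
  rw [intervalIntegral.integral_congr hpoint, intervalIntegral.integral_smul,
    intervalIntegral.integral_comp_mul_left (fun t => t ^ p • g t) hc.ne', smul_smul,
    Real.rpow_add_one hc.ne', mul_inv]

end PowerSubstitution

theorem Real.Gamma_mul_Gamma_one_add_div_Gamma {a : ℝ} (ha : 0 < a) :
    Real.Gamma a * Real.Gamma (1 + a) / Real.Gamma (a + (1 + a)) =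
      Real.Gamma a ^ 2 / (2 * Real.Gamma (2 * a)) := by
  have h2a : 0 < 2 * a := by positivity
  rw [add_comm 1 a, Real.Gamma_add_one ha.ne', ← add_assoc, ← two_mul,
    Real.Gamma_add_one h2a.ne']
  have hΓ := Real.Gamma_pos_of_pos h2a
  field_simp

theorem betaCDF_sub_betaCDF {a b x y : ℝ} (ha : 0 < a) (hb : 1 ≤ b) (hx : 0 ≤ x) (hxy : x ≤ y)
    (hy : y ≤ 1) :
    betaCDF a b y - betaCDF a b x =
      Real.Gamma (a + b) / (Real.Gamma a * Real.Gamma b) *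
        ∫ t in x..y, t ^ (a - 1) * (1 - t) ^ (b - 1) := by
  have hint : ∀ z,
      IntervalIntegrable (fun t : ℝ => t ^ (a - 1) * (1 - t) ^ (b - 1)) volume 0 z := fun z =>
    (intervalIntegral.intervalIntegrable_rpow' (by linarith)).mul_continuousOn
      ((Real.continuous_rpow_const (by linarith)).comp (continuous_sub_left 1)).continuousOn
  have hclamp : ∀ z : ℝ, 0 ≤ z → z ≤ 1 → max (min z 1) 0 = z := fun z h0 h1 => by
    rw [min_eq_left h1, max_eq_left h0]
  rw [betaCDF, betaCDF, hclamp y (hx.trans hxy) hy, hclamp x hx (hxy.trans hy), ← mul_sub,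
    ← intervalIntegral.integral_of_le (hx.trans hxy), ← intervalIntegral.integral_of_le hx,
    intervalIntegral.integral_interval_sub_left (hint y) (hint x)]

section SublevelSet

variable {ε ν₁ ν₂ u : ℝ}

theorem sub_mul_rpow_div_nonneg (hε : 0 < ε) (hν₁ : 0 ≤ ν₁) (hν₂ : 0 < ν₂) (hν₁u : ν₁ ≤ u)
    {x : ℝ} (hx : x ∈ Icc (0:ℝ) 1) : 0 ≤ (u - ν₁ * x ^ ε) / ν₂ := by
  have hxε : ν₁ * x ^ ε ≤ ν₁ := mul_le_of_le_one_right hν₁ (Real.rpow_le_one hx.1 hx.2 hε.le)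
  exact div_nonneg (by linarith) hν₂.le

theorem setOf_rpow_add_rpow_le_eq (hε : 0 < ε) (hν₁ : 0 ≤ ν₁) (hν₂ : 0 < ν₂) (hν₁u : ν₁ ≤ u) :
    {p : ℝ × ℝ | p.1 ∈ Icc (0:ℝ) 1 ∧ p.2 ∈ Icc (0:ℝ) 1 ∧ ν₁ * p.1 ^ ε + ν₂ * p.2 ^ ε ≤ u} =
      {p : ℝ × ℝ | p.1 ∈ Icc 0 1 ∧ p.2 ∈ Icc 0 (min 1 (((u - ν₁ * p.1 ^ ε) / ν₂) ^ ε⁻¹))} := by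
  ext ⟨x, y⟩
  simp only [mem_ofPred_eq, mem_Icc, le_min_iff, and_assoc]
  refine and_congr_right fun hx₀ => and_congr_right fun hx₁ => and_congr_right fun hy =>
    and_congr_right fun _ => ?_
  rw [Real.le_rpow_inv_iff_of_pos hy (sub_mul_rpow_div_nonneg hε hν₁ hν₂ hν₁u ⟨hx₀, hx₁⟩) hε,
    le_div_iff₀' hν₂]
  constructor <;> intro h <;> linarith

theorem volume_setOf_rpow_add_rpow_le (hε : 0 < ε) (hν₁ : 0 ≤ ν₁) (hν₂ : 0 < ν₂)
    (hν₁u : ν₁ ≤ u) :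
    (volume {p : ℝ × ℝ | p.1 ∈ Icc (0:ℝ) 1 ∧ p.2 ∈ Icc (0:ℝ) 1 ∧
        ν₁ * p.1 ^ ε + ν₂ * p.2 ^ ε ≤ u}).toReal =
      ∫ x in (0:ℝ)..1, min 1 (((u - ν₁ * x ^ ε) / ν₂) ^ ε⁻¹) := by
  have hcont : Continuous fun x : ℝ => min 1 (((u - ν₁ * x ^ ε) / ν₂) ^ ε⁻¹) := by
    fun_prop (disch := positivity)
  have hnonneg : ∀ x ∈ Icc (0:ℝ) 1, 0 ≤ min 1 (((u - ν₁ * x ^ ε) / ν₂) ^ ε⁻¹) := fun x hx =>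
    le_min zero_le_one (Real.rpow_nonneg (sub_mul_rpow_div_nonneg hε hν₁ hν₂ hν₁u hx) _)
  rw [setOf_rpow_add_rpow_le_eq hε hν₁ hν₂ hν₁u, Measure.volume_eq_prod,
    volume_region_between_cc_eq_integral (f := fun _ => 0)
      (integrableOn_const isCompact_Icc.measure_ne_top) hcont.integrableOn_Icc measurableSet_Icc
      measurable_const hcont.measurable hnonneg,
    ENNReal.toReal_ofReal
      (setIntegral_nonneg measurableSet_Icc fun x hx => by simpa using hnonneg x hx),
    integral_Icc_eq_integral_Ioc, ← intervalIntegral.integral_of_le zero_le_one]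
  simp only [Pi.sub_apply, sub_zero]

theorem integral_min_one_rpow_eq_add (hε : 0 < ε) (hν₁ : 0 < ν₁) (hν₂ : 0 < ν₂) (hν₁u : ν₁ ≤ u)
    (hu : ν₂ ≤ u) (hu' : u ≤ ν₁ + ν₂) :
    ∫ x in (0:ℝ)..1, min 1 (((u - ν₁ * x ^ ε) / ν₂) ^ ε⁻¹) =
      ((u - ν₂) / ν₁) ^ ε⁻¹ +
        ∫ x in ((u - ν₂) / ν₁) ^ ε⁻¹..1, ((u - ν₁ * x ^ ε) / ν₂) ^ ε⁻¹ := by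
  have hy₀ : 0 ≤ (u - ν₂) / ν₁ := div_nonneg (by linarith) hν₁.le
  have hy₀' : (u - ν₂) / ν₁ ≤ 1 := (div_le_one hν₁).mpr (by linarith)
  have hcont : Continuous fun x : ℝ => ((u - ν₁ * x ^ ε) / ν₂) ^ ε⁻¹ := by
    fun_prop (disch := positivity)
  rw [intervalIntegral.integral_min_eq_of_le_of_le (Real.rpow_nonneg hy₀ _)
    (Real.rpow_le_one hy₀ hy₀' (inv_nonneg.mpr hε.le)) (hcont.intervalIntegrable _ _), one_mul,
    sub_zero]
  · rintro x ⟨hx0, hx⟩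
    refine Real.one_le_rpow ((one_le_div hν₂).mpr ?_) (inv_nonneg.mpr hε.le)
    linarith [(le_div_iff₀' hν₁).mp ((Real.le_rpow_inv_iff_of_pos hx0 hy₀ hε).mp hx)]
  · rintro x ⟨hx, hx1⟩
    have hx0 : 0 ≤ x := (Real.rpow_nonneg hy₀ _).trans hx
    refine Real.rpow_le_one (sub_mul_rpow_div_nonneg hε hν₁.le hν₂ hν₁u ⟨hx0, hx1⟩)
      ((div_le_one hν₂).mpr ?_) (inv_nonneg.mpr hε.le)
    linarith [(div_le_iff₀' hν₁).mp ((Real.rpow_inv_le_iff_of_pos hy₀ hx0 hε).mp hx)]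

theorem integral_rpow_eq_mul_integral_beta (hε : 0 < ε) (hν₁ : 0 < ν₁) (hν₂ : 0 < ν₂)
    (hν₁u : ν₁ ≤ u) (hu : ν₂ ≤ u) (hu' : u ≤ ν₁ + ν₂) :
    ∫ x in ((u - ν₂) / ν₁) ^ ε⁻¹..1, ((u - ν₁ * x ^ ε) / ν₂) ^ ε⁻¹ =
      ε⁻¹ * (u ^ 2 / (ν₁ * ν₂)) ^ ε⁻¹ *
        ∫ t in (1 - ν₂ / u)..(ν₁ / u), t ^ (ε⁻¹ - 1) * (1 - t) ^ ε⁻¹ := by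
  have hu0 : 0 < u := hν₂.trans_le hu
  have hy₀ : 0 ≤ (u - ν₂) / ν₁ := div_nonneg (by linarith) hν₁.le
  have hy₀' : (u - ν₂) / ν₁ ≤ 1 := (div_le_one hν₁).mpr (by linarith)
  have hfactor : EqOn (fun y => y ^ (ε⁻¹ - 1) • ((u - ν₁ * y) / ν₂) ^ ε⁻¹)
      (fun y => (u / ν₂) ^ ε⁻¹ • (y ^ (ε⁻¹ - 1) • (1 - ν₁ / u * y) ^ ε⁻¹))
      (uIcc ((u - ν₂) / ν₁) 1) := by
    intro y hy
    rw [uIcc_of_le hy₀'] at hy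
    have hνy : ν₁ / u * y ≤ 1 := by
      rw [div_mul_eq_mul_div, div_le_one hu0]; nlinarith [hy.2]
    simp only [smul_eq_mul]
    rw [mul_left_comm, ← Real.mul_rpow (by positivity) (by linarith)]
    congr 2
    field_simp
  rw [intervalIntegral.integral_comp_rpow (g := fun y => ((u - ν₁ * y) / ν₂) ^ ε⁻¹) hε
      (Real.rpow_nonneg hy₀ _) (Real.rpow_le_one hy₀ hy₀' (inv_nonneg.mpr hε.le)),
    Real.rpow_inv_rpow hy₀ hε.ne', Real.one_rpow, intervalIntegral.integral_congr hfactor,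
    intervalIntegral.integral_smul,
    intervalIntegral.integral_rpow_smul_comp_mul_left (g := fun t => (1 - t) ^ ε⁻¹)
      (by positivity) hy₀ zero_le_one, sub_add_cancel, mul_one,
    show ν₁ / u * ((u - ν₂) / ν₁) = 1 - ν₂ / u by field_simp]
  simp only [smul_eq_mul]
  rw [← Real.inv_rpow (by positivity), ← mul_assoc ((u / ν₂) ^ ε⁻¹),
    ← Real.mul_rpow (by positivity) (by positivity),
    show u / ν₂ * (ν₁ / u)⁻¹ = u ^ 2 / (ν₁ * ν₂) by field_simp, mul_assoc]

end SublevelSet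

/-- For ν₂ ≤ u < ν₁ + ν₂ (with 0 < ν₁ ≤ ν₂),
Leb{(x,y) ∈ [0,1]² : ν₁x^ε + ν₂y^ε ≤ u}
 = ((u-ν₂)/ν₁)^{1/ε} + (Γ(1/ε)²/(2εΓ(2/ε))) (u²/(ν₁ν₂))^{1/ε}
   [F(ν₁/u; 1/ε, 1+1/ε) − F(1 − ν₂/u; 1/ε, 1+1/ε)]. -/
theorem stmt9 (ε : ℝ) (hε : 0 < ε) (ν₁ ν₂ : ℝ) (hν₁ : 0 < ν₁) (hν : ν₁ ≤ ν₂)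
    (u : ℝ) (hu : ν₂ ≤ u) (hu' : u < ν₁ + ν₂) :
    (volume {p : ℝ × ℝ | p.1 ∈ Set.Icc (0:ℝ) 1 ∧ p.2 ∈ Set.Icc (0:ℝ) 1 ∧
        ν₁ * p.1 ^ ε + ν₂ * p.2 ^ ε ≤ u}).toReal
      = ((u - ν₂) / ν₁) ^ (1/ε)
        + Real.Gamma (1/ε) ^ 2 / (2 * ε * Real.Gamma (2/ε)) * (u^2 / (ν₁ * ν₂)) ^ (1/ε)
          * (betaCDF (1/ε) (1 + 1/ε) (ν₁ / u) - betaCDF (1/ε) (1 + 1/ε) (1 - ν₂ / u)) := by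
  have hν₂ : 0 < ν₂ := hν₁.trans_le hν
  have hu0 : 0 < u := hν₂.trans_le hu
  have hε' : 0 < ε⁻¹ := inv_pos.mpr hε
  have ht₀ : 0 ≤ 1 - ν₂ / u := sub_nonneg.mpr ((div_le_one hu0).mpr hu)
  have ht₀t₁ : 1 - ν₂ / u ≤ ν₁ / u := by
    rw [sub_le_iff_le_add, ← add_div, le_div_iff₀ hu0]; linarith
  have ht₁ : ν₁ / u ≤ 1 := (div_le_one hu0).mpr (hν.trans hu)
  simp only [one_div]
  rw [volume_setOf_rpow_add_rpow_le hε hν₁.le hν₂ (hν.trans hu),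
    integral_min_one_rpow_eq_add hε hν₁ hν₂ (hν.trans hu) hu hu'.le,
    integral_rpow_eq_mul_integral_beta hε hν₁ hν₂ (hν.trans hu) hu hu'.le,
    betaCDF_sub_betaCDF hε' (by linarith) ht₀ ht₀t₁ ht₁, add_sub_cancel_left,
    ← inv_div (Real.Gamma ε⁻¹ * _),
    Real.Gamma_mul_Gamma_one_add_div_Gamma hε', div_eq_mul_inv 2 ε]
  have hΓ := Real.Gamma_pos_of_pos hε'
  have hΓ₂ := Real.Gamma_pos_of_pos (mul_pos two_pos hε')
  field_simp
end

section
/- Define H(t) = ln(t·Γ(t)/(1+t)^t) for t > 0. Then H is strictly concave on (0,∞); in particular H''(t) = ψ'(t) − 1/t² − 1/(1+t)² − 1/(1+t) < 0 for all t > 0, where ψ' is the trigamma function. -/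
/-!
Gauss's limit formula `log Γ(x) = lim (x log n + log n! - Σ_{m ≤ n} log (x + m))` can be
differentiated twice term by term, because the differentiated sequences converge locally
uniformly on `(0, ∞)`. This gives `ψ(t) = -γ + Σ_m (1/(m+1) - 1/(m+t))` and
`ψ'(t) = Σ_k 1/(k+t)²`, hence the formula for `H''`. For its sign, split off the terms `k = 0, 1`
of `ψ'(t)` and bound the rest by the telescoping series
`Σ_{k ≥ 2} (1/(k-1+t) - 1/(k+t)) = 1/(1+t)`, termwise strictly.
-/

noncomputable def Hfun (t : ℝ) : ℝ := Real.log (t * Real.Gamma t / (1 + t) ^ t)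

open Real Filter Set Topology

lemma summable_one_div_nat_add_sq {a : ℝ} (ha : 0 < a) :
    Summable fun m : ℕ => 1 / ((m : ℝ) + a) ^ 2 := by
  refine ((summable_one_div_nat_add_rpow a 2).2 one_lt_two).congr fun m => ?_
  rw [abs_of_pos (by positivity), rpow_two]

lemma abs_one_div_nat_add_one_sub_le {a b x : ℝ} (ha : 0 < a) (ha1 : a ≤ 1) (hax : a ≤ x)
    (hxb : x ≤ b) (m : ℕ) :
    |1 / ((m : ℝ) + 1) - 1 / ((m : ℝ) + x)| ≤ (b + 1) * (1 / ((m : ℝ) + a) ^ 2) := by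
  have hma : 0 < (m : ℝ) + a := by positivity
  have hmx : 0 < (m : ℝ) + x := by linarith
  have hdiff : 1 / ((m : ℝ) + 1) - 1 / ((m : ℝ) + x)
      = (x - 1) / (((m : ℝ) + 1) * ((m : ℝ) + x)) := by
    field_simp
    ring
  have hprod : ((m : ℝ) + a) ^ 2 ≤ ((m : ℝ) + 1) * ((m : ℝ) + x) := by
    rw [sq]; gcongr
  have habs : |x - 1| ≤ b + 1 := abs_le.2 ⟨by linarith, by linarith⟩
  rw [hdiff, abs_div, abs_of_pos (mul_pos (by positivity) hmx), mul_one_div]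
  exact div_le_div₀ (by linarith) habs (by positivity) hprod

noncomputable def trigammaSeries (t : ℝ) : ℝ := ∑' k : ℕ, 1 / ((k : ℝ) + t) ^ 2

noncomputable def digammaSeries (t : ℝ) : ℝ :=
  -eulerMascheroniConstant + ∑' m : ℕ, (1 / ((m : ℝ) + 1) - 1 / ((m : ℝ) + t))

lemma summable_one_div_nat_add_one_sub {t : ℝ} (ht : 0 < t) :
    Summable fun m : ℕ => 1 / ((m : ℝ) + 1) - 1 / ((m : ℝ) + t) :=
  .of_norm_bounded ((summable_one_div_nat_add_sq (lt_min ht one_pos)).mul_left (t + 1))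
    fun m => abs_one_div_nat_add_one_sub_le (lt_min ht one_pos) (min_le_right _ _)
      (min_le_left _ _) le_rfl m

lemma tendstoUniformlyOn_trigammaSeries {a : ℝ} (ha : 0 < a) :
    TendstoUniformlyOn (fun N x => ∑ m ∈ Finset.range N, 1 / ((m : ℝ) + x) ^ 2) trigammaSeries
      atTop (Ioi a) :=
  tendstoUniformlyOn_tsum_nat (summable_one_div_nat_add_sq ha) fun m x hx => by
    rw [norm_of_nonneg (by positivity)]
    have hax : a ≤ x := le_of_lt hx
    gcongr

lemma tendstoUniformlyOn_sum_one_div_nat_add_one_sub {a b : ℝ} (ha : 0 < a) (ha1 : a ≤ 1) :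
    TendstoUniformlyOn (fun N x => ∑ m ∈ Finset.range N, (1 / ((m : ℝ) + 1) - 1 / ((m : ℝ) + x)))
      (fun x => ∑' m : ℕ, (1 / ((m : ℝ) + 1) - 1 / ((m : ℝ) + x))) atTop (Ioo a b) :=
  tendstoUniformlyOn_tsum_nat ((summable_one_div_nat_add_sq ha).mul_left (b + 1))
    fun m _ hx => abs_one_div_nat_add_one_sub_le ha ha1 hx.1.le hx.2.le m

lemma hasDerivAt_one_div_nat_add_one_sub (m : ℕ) {x : ℝ} (hx : 0 < x) :
    HasDerivAt (fun y => 1 / ((m : ℝ) + 1) - 1 / ((m : ℝ) + y)) (1 / ((m : ℝ) + x) ^ 2) x := by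
  have h := ((hasDerivAt_id x).const_add (m : ℝ)).inv (by positivity)
  simpa [one_div, neg_div] using h.const_sub _

lemma hasDerivAt_digammaSeries {t : ℝ} (ht : 0 < t) :
    HasDerivAt digammaSeries (trigammaSeries t) t := by
  refine hasDerivAt_of_tendstoUniformlyOn isOpen_Ioi
    (tendstoUniformlyOn_trigammaSeries (half_pos ht)) ?_ (fun x hx => ?_)
    (show t ∈ Ioi (t / 2) from half_lt_self ht)
    (f := fun N x => -eulerMascheroniConstant +
      ∑ m ∈ Finset.range N, (1 / ((m : ℝ) + 1) - 1 / ((m : ℝ) + x)))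
  · filter_upwards with N x hx
    exact (HasDerivAt.fun_sum fun m _ =>
      hasDerivAt_one_div_nat_add_one_sub m ((half_pos ht).trans hx)).const_add _
  · exact (summable_one_div_nat_add_one_sub ((half_pos ht).trans hx)).hasSum.tendsto_sum_nat
      |>.const_add _

lemma hasDerivAt_logGammaSeq (n : ℕ) {x : ℝ} (hx : 0 < x) :
    HasDerivAt (fun y => BohrMollerup.logGammaSeq y n)
      (log n - ∑ m ∈ Finset.range (n + 1), 1 / ((m : ℝ) + x)) x := by
  have hlog : HasDerivAt (fun y => ∑ m ∈ Finset.range (n + 1), log (y + m))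
      (∑ m ∈ Finset.range (n + 1), 1 / ((m : ℝ) + x)) x := by
    refine HasDerivAt.fun_sum fun m _ => ?_
    have h := ((hasDerivAt_id x).add_const (m : ℝ)).log (by positivity)
    simpa [add_comm, one_div] using h
  unfold BohrMollerup.logGammaSeq
  simpa using (((hasDerivAt_id x).mul_const (log n)).add_const (log n.factorial)).fun_sub hlog

lemma tendsto_log_sub_harmonic_succ :
    Tendsto (fun n : ℕ => log n - ∑ m ∈ Finset.range (n + 1), 1 / ((m : ℝ) + 1)) atTop
      (𝓝 (-eulerMascheroniConstant)) := by
  have h := (tendsto_harmonic_sub_log.comp (tendsto_add_atTop_nat 1)).neg.sub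
    tendsto_log_nat_add_one_sub_log
  rw [sub_zero] at h
  refine h.congr fun n => ?_
  simp [harmonic, one_div]

lemma tendstoUniformlyOn_deriv_logGammaSeq {a b : ℝ} (ha : 0 < a) (ha1 : a ≤ 1) :
    TendstoUniformlyOn (fun (n : ℕ) x => log n - ∑ m ∈ Finset.range (n + 1), 1 / ((m : ℝ) + x))
      digammaSeries atTop (Ioo a b) := by
  have hshift : TendstoUniformlyOn
      (fun (n : ℕ) x => ∑ m ∈ Finset.range (n + 1), (1 / ((m : ℝ) + 1) - 1 / ((m : ℝ) + x)))
      (fun x => ∑' m : ℕ, (1 / ((m : ℝ) + 1) - 1 / ((m : ℝ) + x))) atTop (Ioo a b) :=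
    fun u hu => (tendsto_add_atTop_nat 1).eventually
      (tendstoUniformlyOn_sum_one_div_nat_add_one_sub ha ha1 u hu)
  have h := (tendsto_log_sub_harmonic_succ.tendstoUniformlyOn_const (Ioo a b)).add hshift
  refine h.congr ?_
  filter_upwards with n x _
  simp

lemma hasDerivAt_log_Gamma {t : ℝ} (ht : 0 < t) :
    HasDerivAt (fun x => log (Gamma x)) (digammaSeries t) t := by
  have ha : 0 < min t 1 / 2 := by positivity
  refine hasDerivAt_of_tendstoUniformlyOn isOpen_Ioo
    (tendstoUniformlyOn_deriv_logGammaSeq ha (by linarith [min_le_right t 1]) (b := t + 1))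
    (f := fun n x => BohrMollerup.logGammaSeq x n) ?_
    (fun x hx => BohrMollerup.tendsto_log_gamma (ha.trans hx.1))
    (show t ∈ Ioo (min t 1 / 2) (t + 1) from ⟨by linarith [min_le_left t 1], by linarith⟩)
  filter_upwards with n x hx
  exact hasDerivAt_logGammaSeq n (ha.trans hx.1)

lemma Hfun_eq_of_pos {x : ℝ} (hx : 0 < x) :
    Hfun x = log x + log (Gamma x) - x * log (1 + x) := by
  rw [Hfun, log_div (by positivity [Gamma_pos_of_pos hx]) (by positivity),
    log_mul hx.ne' (Gamma_pos_of_pos hx).ne', log_rpow (by linarith)]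

lemma hasDerivAt_Hfun {t : ℝ} (ht : 0 < t) :
    HasDerivAt Hfun (1 / t + digammaSeries t - log (1 + t) - t / (1 + t)) t := by
  have h1t : 0 < 1 + t := by linarith
  have hlog1 : HasDerivAt (fun x => log (1 + x)) (1 / (1 + t)) t := by
    simpa [one_div] using ((hasDerivAt_id t).const_add 1).log h1t.ne'
  have h := ((hasDerivAt_log ht.ne').add (hasDerivAt_log_Gamma ht)).sub
    ((hasDerivAt_id t).mul hlog1)
  refine (h.congr_of_eventuallyEq ?_).congr_deriv ?_
  · filter_upwards [eventually_gt_nhds ht] with x hx using Hfun_eq_of_pos hx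
  · simp only [id]
    field_simp
    ring

lemma hasDerivAt_deriv_Hfun {t : ℝ} (ht : 0 < t) :
    HasDerivAt (deriv Hfun)
      (trigammaSeries t - 1 / t ^ 2 - 1 / (1 + t) ^ 2 - 1 / (1 + t)) t := by
  have h1t : 0 < 1 + t := by linarith
  have hin : HasDerivAt (fun x : ℝ => 1 + x) 1 t := (hasDerivAt_id t).const_add 1
  have h := ((((hasDerivAt_id t).inv ht.ne').add (hasDerivAt_digammaSeries ht)).sub
    (hin.log h1t.ne')).sub ((hasDerivAt_id t).div hin h1t.ne')
  refine (h.congr_of_eventuallyEq ?_).congr_deriv ?_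
  · filter_upwards [eventually_gt_nhds ht] with x hx
    simp [(hasDerivAt_Hfun hx).deriv, one_div]
  · simp only [id]
    field_simp
    ring

lemma hasSum_sub_succ_of_antitone {f : ℕ → ℝ} (hf : Antitone f) (h0 : Tendsto f atTop (𝓝 0)) :
    HasSum (fun n => f n - f (n + 1)) (f 0) := by
  rw [hasSum_iff_tendsto_nat_of_nonneg (fun n => sub_nonneg.2 (hf n.le_succ))]
  simp only [Finset.sum_range_sub']
  simpa using (tendsto_const_nhds (x := f 0)).sub h0

lemma one_div_sq_lt_one_div_sub_one_sub_one_div {x : ℝ} (hx : 1 < x) :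
    1 / x ^ 2 < 1 / (x - 1) - 1 / x := by
  rw [div_sub_div _ _ (by linarith) (by linarith), show 1 * x - (x - 1) * 1 = 1 by ring, sq]
  exact one_div_lt_one_div_of_lt (mul_pos (by linarith) (by linarith)) (by nlinarith)

lemma trigammaSeries_lt {t : ℝ} (ht : 0 < t) :
    trigammaSeries t < 1 / t ^ 2 + 1 / (1 + t) ^ 2 + 1 / (1 + t) := by
  have htelescope := hasSum_sub_succ_of_antitone (f := fun n : ℕ => 1 / ((n : ℝ) + 1 + t))
    (fun m n hmn => by dsimp only; gcongr) (by
      refine tendsto_const_nhds.div_atTop (tendsto_atTop_add_const_right _ t ?_)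
      exact tendsto_atTop_add_const_right _ 1 tendsto_natCast_atTop_atTop)
  have hterm (n : ℕ) : 1 / ((n : ℝ) + 2 + t) ^ 2
      < 1 / ((n : ℝ) + 1 + t) - 1 / (((n + 1 : ℕ) : ℝ) + 1 + t) := by
    have h := one_div_sq_lt_one_div_sub_one_sub_one_div (x := (n : ℝ) + 2 + t)
      (by linarith [n.cast_nonneg (α := ℝ)])
    push_cast
    convert h using 3 <;> ring
  have htail : ∑' n : ℕ, 1 / ((n : ℝ) + 2 + t) ^ 2 < 1 / (1 + t) := by
    convert Summable.tsum_lt_tsum_of_nonneg (i := 0) (fun n => by positivity)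
      (fun n => (hterm n).le) (hterm 0) htelescope.summable
    rw [htelescope.tsum_eq]
    norm_num
  rw [trigammaSeries, ← (summable_one_div_nat_add_sq ht).sum_add_tsum_nat_add 2]
  simp only [Finset.sum_range_succ, Finset.sum_range_zero]
  push_cast
  simp only [zero_add]
  linarith

/-- H is strictly concave on (0,∞); in particular
H''(t) = ψ'(t) − 1/t² − 1/(1+t)² − 1/(1+t) < 0 for t > 0, where
ψ'(t) = Σ_{k≥0} 1/(k+t)² is the trigamma function. -/
theorem stmt11 :
    StrictConcaveOn ℝ (Set.Ioi 0) Hfun ∧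
      ∀ t : ℝ, 0 < t →
        deriv (deriv Hfun) t
            = (∑' k : ℕ, 1 / ((k : ℝ) + t) ^ 2) - 1 / t ^ 2 - 1 / (1 + t) ^ 2 - 1 / (1 + t)
          ∧ deriv (deriv Hfun) t < 0 := by
  have hderiv2 (t : ℝ) (ht : 0 < t) := (hasDerivAt_deriv_Hfun ht).deriv
  have hneg (t : ℝ) (ht : 0 < t) : deriv (deriv Hfun) t < 0 := by
    linarith [hderiv2 t ht, trigammaSeries_lt ht]
  refine ⟨strictConcaveOn_of_deriv2_neg (convex_Ioi 0) (fun x hx => ?_) ?_,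
    fun t ht => ⟨hderiv2 t ht, hneg t ht⟩⟩
  · exact (hasDerivAt_Hfun hx).continuousAt.continuousWithinAt
  · simpa using hneg
end

section
/- Define H(t) = ln(t·Γ(t)/(1+t)^t) for t > 0. Then H(t) → 0 as t → 0⁺, and consequently (using strict concavity of H) for every real K > 1 and t > 0, K·H(t) > H(Kt). -/
/-!
On `t ≥ 0` we have `H t = log Γ(t + 1) - t log (1 + t)`, the pointwise limit of the Gauss
approximants `logGammaSeq (t + 1) n - t log (1 + t)`. Telescoping writes each approximant as an
affine function plus `negMulLog (n + 1 + t)` minus `∑ m < n, G (m + 1 + t)`, where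
`G y = y (log y - log (y + 1))` is strictly convex (`G'' y = 1 / (y (y + 1)²)`). Hence the
approximants, and so `H`, are concave. Since `H (1 + t) - H t = G (1 + t)`, the function
`H = H (1 + ·) - G (1 + ·)` is even strictly concave, and strict concavity together with
`H 0 = 0` gives `H (K t) < K H t` for `K > 1`.
-/

open Real Filter Topology Set
open scoped Nat

noncomputable def mulLogRatioSucc (y : ℝ) : ℝ := y * (log y - log (y + 1))

lemma hasDerivAt_mulLogRatioSucc {y : ℝ} (hy : 0 < y) :
    HasDerivAt mulLogRatioSucc (log y - log (y + 1) + (y + 1)⁻¹) y := by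
  have hy1 : y + 1 ≠ 0 := by positivity
  refine ((hasDerivAt_id' y).fun_mul ((hasDerivAt_log hy.ne').fun_sub
    (((hasDerivAt_id' y).add_const 1).log hy1))).congr_deriv ?_
  field_simp
  ring

lemma hasDerivAt_deriv_mulLogRatioSucc {y : ℝ} (hy : 0 < y) :
    HasDerivAt (fun y ↦ log y - log (y + 1) + (y + 1)⁻¹) (y⁻¹ * ((y + 1) ^ 2)⁻¹) y := by
  have hy1 : y + 1 ≠ 0 := by positivity
  refine (((hasDerivAt_log hy.ne').fun_sub (((hasDerivAt_id' y).add_const 1).log hy1)).fun_add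
    (((hasDerivAt_id' y).add_const 1).fun_inv hy1)).congr_deriv ?_
  field_simp
  ring

lemma strictConvexOn_mulLogRatioSucc : StrictConvexOn ℝ (Ioi 0) mulLogRatioSucc := by
  have hderiv : EqOn (fun y ↦ log y - log (y + 1) + (y + 1)⁻¹) (deriv mulLogRatioSucc) (Ioi 0) :=
    fun y hy ↦ (hasDerivAt_mulLogRatioSucc hy).deriv.symm
  refine StrictMonoOn.strictConvexOn_of_deriv (convex_Ioi 0)
    (fun y hy ↦ (hasDerivAt_mulLogRatioSucc hy).continuousAt.continuousWithinAt) ?_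
  rw [interior_Ioi]
  refine StrictMonoOn.congr (strictMonoOn_of_hasDerivWithinAt_pos (convex_Ioi 0)
    (fun y hy ↦ (hasDerivAt_deriv_mulLogRatioSucc hy).continuousAt.continuousWithinAt)
    (f' := fun y ↦ y⁻¹ * ((y + 1) ^ 2)⁻¹) (fun y hy ↦ ?_) (fun y hy ↦ ?_)) hderiv
  all_goals rw [interior_Ioi] at hy
  · exact (hasDerivAt_deriv_mulLogRatioSucc hy).hasDerivWithinAt
  · have : 0 < y := hy
    positivity

lemma convexOn_finset_sum {ι E : Type*} [AddCommGroup E] [Module ℝ E] {s : Set E}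
    {t : Finset ι} {f : ι → E → ℝ} (hs : Convex ℝ s) (hf : ∀ i ∈ t, ConvexOn ℝ s (f i)) :
    ConvexOn ℝ s (fun x ↦ ∑ i ∈ t, f i x) := by
  classical
  induction t using Finset.induction_on with
  | empty => simpa using convexOn_const 0 hs
  | insert i t hi ih =>
    simp only [Finset.sum_insert hi]
    exact (hf i (t.mem_insert_self i)).add (ih fun j hj ↦ hf j (Finset.mem_insert_of_mem hj))

lemma concaveOn_of_tendsto {ι E : Type*} [AddCommGroup E] [Module ℝ E] {l : Filter ι} [l.NeBot]
    {s : Set E} {f : ι → E → ℝ} {g : E → ℝ} (hf : ∀ i, ConcaveOn ℝ s (f i))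
    (hg : ∀ x ∈ s, Tendsto (fun i ↦ f i x) l (𝓝 (g x))) : ConcaveOn ℝ s g := by
  obtain ⟨i⟩ := l.nonempty_of_neBot
  refine ⟨(hf i).1, fun x hx y hy a b ha hb hab ↦ ?_⟩
  exact le_of_tendsto_of_tendsto' (((hg x hx).const_smul a).add ((hg y hy).const_smul b))
    (hg _ ((hf i).1 hx hy ha hb hab)) fun j ↦ (hf j).2 hx hy ha hb hab

lemma sum_log_add_mul_log_eq (x : ℝ) (n : ℕ) :
    ∑ m ∈ Finset.range (n + 1), log (x + 1 + m) + x * log (1 + x)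
      = (n + 1 + x) * log (n + 1 + x) + ∑ m ∈ Finset.range n, mulLogRatioSucc (m + 1 + x) := by
  induction n with
  | zero => simp; ring_nf
  | succ n ih =>
    rw [Finset.sum_range_succ, add_right_comm, ih, Finset.sum_range_succ, mulLogRatioSucc]
    push_cast
    ring_nf

lemma logGammaSeq_add_one_sub_eq (x : ℝ) (n : ℕ) :
    BohrMollerup.logGammaSeq (x + 1) n - x * log (1 + x)
      = (x + 1) * log n + log n ! + negMulLog (n + 1 + x)
        - ∑ m ∈ Finset.range n, mulLogRatioSucc (m + 1 + x) := by
  have := sum_log_add_mul_log_eq x n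
  rw [BohrMollerup.logGammaSeq, negMulLog]
  linarith

lemma concaveOn_logGammaSeq_add_one_sub (n : ℕ) :
    ConcaveOn ℝ (Ici 0) (fun x ↦ BohrMollerup.logGammaSeq (x + 1) n - x * log (1 + x)) := by
  have haffine : ConcaveOn ℝ (Ici 0) (fun x : ℝ ↦ (x + 1) * log n + log n !) :=
    ⟨convex_Ici 0, fun x _ y _ a b _ _ hab ↦ le_of_eq <| by
      simp only [smul_eq_mul]
      linear_combination (log n + log n !) * hab⟩
  have hnegMulLog : ConcaveOn ℝ (Ici 0) (fun x ↦ negMulLog (n + 1 + x)) :=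
    (concaveOn_negMulLog.translate_right _).subset
      (fun x (hx : 0 ≤ x) ↦ (by positivity : 0 ≤ (n + 1 : ℝ) + x)) (convex_Ici 0)
  have hsum : ConvexOn ℝ (Ici 0) (fun x ↦ ∑ m ∈ Finset.range n, mulLogRatioSucc (m + 1 + x)) :=
    convexOn_finset_sum (convex_Ici 0) fun m _ ↦
      (strictConvexOn_mulLogRatioSucc.convexOn.translate_right _).subset
        (fun x (hx : 0 ≤ x) ↦ (by positivity : 0 < (m + 1 : ℝ) + x)) (convex_Ici 0)
  exact ((haffine.add hnegMulLog).sub hsum).congr fun x _ ↦ (logGammaSeq_add_one_sub_eq x n).symm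

lemma Hfun_eq_log_Gamma_add_one_sub {t : ℝ} (ht : 0 ≤ t) :
    Hfun t = log (Gamma (t + 1)) - t * log (1 + t) := by
  rcases ht.eq_or_lt with rfl | ht
  · -- `Hfun 0 = log 0 = 0`
    simp [Hfun]
  have h1 : 0 < 1 + t := by positivity
  rw [Hfun, ← Gamma_add_one ht.ne', log_div (Gamma_pos_of_pos (by positivity)).ne'
    (rpow_pos_of_pos h1 t).ne', log_rpow h1]

lemma concaveOn_Hfun : ConcaveOn ℝ (Ici 0) Hfun :=
  concaveOn_of_tendsto (l := atTop) concaveOn_logGammaSeq_add_one_sub fun x (hx : 0 ≤ x) ↦ by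
    rw [Hfun_eq_log_Gamma_add_one_sub hx]
    exact (BohrMollerup.tendsto_log_gamma (by positivity)).sub_const _

lemma Hfun_one_add_sub_Hfun {t : ℝ} (ht : 0 ≤ t) :
    Hfun (1 + t) - Hfun t = mulLogRatioSucc (1 + t) := by
  rw [Hfun_eq_log_Gamma_add_one_sub ht, Hfun_eq_log_Gamma_add_one_sub (by positivity),
    mulLogRatioSucc, add_comm 1 t, Gamma_add_one (by positivity),
    log_mul (by positivity) (Gamma_pos_of_pos (by positivity)).ne']
  ring_nf

lemma strictConcaveOn_Hfun : StrictConcaveOn ℝ (Ici 0) Hfun := by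
  have hshift : ConcaveOn ℝ (Ici 0) (fun t ↦ Hfun (1 + t)) :=
    (concaveOn_Hfun.translate_right 1).subset
      (fun t (ht : 0 ≤ t) ↦ (by positivity : (0 : ℝ) ≤ 1 + t)) (convex_Ici 0)
  have hstep : StrictConvexOn ℝ (Ici 0) (fun t ↦ mulLogRatioSucc (1 + t)) :=
    (strictConvexOn_mulLogRatioSucc.translate_right 1).subset
      (fun t (ht : 0 ≤ t) ↦ (by positivity : (0 : ℝ) < 1 + t)) (convex_Ici 0)
  refine (hshift.sub_strictConvexOn hstep).congr fun t ht ↦ ?_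
  simp only [Pi.sub_apply]
  linarith [Hfun_one_add_sub_Hfun ht]

lemma StrictConcaveOn.map_mul_lt_mul_map {f : ℝ → ℝ} (hf : StrictConcaveOn ℝ (Ici 0) f)
    (h0 : 0 ≤ f 0) {K t : ℝ} (hK : 1 < K) (ht : 0 < t) : f (K * t) < K * f t := by
  have hK0 : 0 < K := by linarith
  have hcombo := @hf.2 0 self_mem_Ici (K * t) (by simp; positivity) (by positivity)
    (1 - K⁻¹) K⁻¹ (by simp [inv_lt_one_of_one_lt₀ hK]) (by positivity) (by ring)
  rw [smul_zero, zero_add, smul_eq_mul, smul_eq_mul, smul_eq_mul,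
    inv_mul_cancel_left₀ hK0.ne'] at hcombo
  calc f (K * t) ≤ (K - 1) * f 0 + f (K * t) := by nlinarith
    _ = K * ((1 - K⁻¹) * f 0 + K⁻¹ * f (K * t)) := by field_simp
    _ < K * f t := mul_lt_mul_of_pos_left hcombo hK0

lemma tendsto_Hfun_zero : Tendsto Hfun (𝓝[>] 0) (𝓝 0) := by
  have hcont : ContinuousAt (fun t ↦ log (Gamma (t + 1)) - t * log (1 + t)) 0 := by
    have hΓ : ContinuousAt (fun t ↦ Gamma (t + 1)) 0 :=
      ContinuousAt.comp (g := Gamma) (x := 0)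
        (differentiableAt_Gamma fun m h ↦ by linarith [m.cast_nonneg (α := ℝ)]).continuousAt
        (by fun_prop)
    exact (hΓ.log (by simp)).sub
      (continuousAt_id.mul ((by fun_prop : ContinuousAt (fun t : ℝ ↦ 1 + t) 0).log (by simp)))
  have hlim := hcont.tendsto.mono_left (nhdsWithin_le_nhds (s := Ioi 0))
  rw [show log (Gamma (0 + 1)) - 0 * log (1 + 0) = 0 by simp] at hlim
  exact hlim.congr' (eventually_nhdsWithin_of_forall fun t ht ↦
    (Hfun_eq_log_Gamma_add_one_sub (le_of_lt ht)).symm)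

/-- H(t) → 0 as t → 0⁺, and for every K > 1 and t > 0, K·H(t) > H(Kt). -/
theorem stmt12 :
    Filter.Tendsto Hfun (nhdsWithin 0 (Set.Ioi 0)) (nhds 0) ∧
      ∀ K t : ℝ, 1 < K → 0 < t → Hfun (K * t) < K * Hfun t :=
  ⟨tendsto_Hfun_zero, fun _ _ hK ht ↦
    strictConcaveOn_Hfun.map_mul_lt_mul_map (by simp [Hfun]) hK ht⟩
end

section
/- For every integer K ≥ 2 and ε > 0, (1/V_ε)^{ε/K}/(K+ε) < 1/(1+ε), where V_ε = (1/ε)^{K-1}Γ(1/ε)^K/(K·Γ(K/ε)) is the volume of {x ∈ [0,1]^K : Σ x_k^ε ≤ 1}. -/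
/-!
With `t = 1/ε` and `H(t) = log Γ(1+t) - t log(1+t)`, the inequality says `H(Kt) < K H(t)`; since
`H(0) = 0` this follows from a uniform strict concavity of `H` on `[0, Kt]`. In the variable
`x = 1 + t`, the Euler approximants `logGammaSeq x n - (x - 1) log x` of `H` have second derivative
`∑_{m ≤ n} (x + m)⁻² - x⁻¹ - x⁻² ≤ -1/(x(2x+1))`, by comparing the sum with a telescoping one. So
they stay concave on `[1, R]` after adding `x² / (2R(2R+1))`, and this survives the limit `n → ∞`.
-/

open Real Filter Set Finset Topology
open Real.BohrMollerup

theorem ConcaveOn.of_tendsto {E ι : Type*} [AddCommGroup E] [Module ℝ E] {l : Filter ι} [l.NeBot]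
    {s : Set E} {f : ι → E → ℝ} {g : E → ℝ} (hf : ∀ᶠ i in l, ConcaveOn ℝ s (f i))
    (hg : ∀ x ∈ s, Tendsto (fun i ↦ f i x) l (𝓝 (g x))) : ConcaveOn ℝ s g := by
  obtain ⟨i, hi⟩ := hf.exists
  refine ⟨hi.1, fun x hx y hy a b ha hb hab ↦ ?_⟩
  exact le_of_tendsto_of_tendsto (((hg x hx).const_smul a).add ((hg y hy).const_smul b))
    (hg _ (hi.1 hx hy ha hb hab)) (hf.mono fun i hi ↦ hi.2 hx hy ha hb hab)

noncomputable def digammaSeq (x : ℝ) (n : ℕ) : ℝ := log n - ∑ m ∈ range (n + 1), (x + m)⁻¹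

noncomputable def trigammaSeq (x : ℝ) (n : ℕ) : ℝ := ∑ m ∈ range (n + 1), ((x + m) ^ 2)⁻¹

theorem hasDerivAt_logGammaSeq_s13 (n : ℕ) {x : ℝ} (hx : 0 < x) :
    HasDerivAt (logGammaSeq · n) (digammaSeq x n) x := by
  have hsum : HasDerivAt (fun y ↦ ∑ m ∈ range (n + 1), log (y + m))
      (∑ m ∈ range (n + 1), (x + m)⁻¹) x :=
    HasDerivAt.fun_sum fun m _ ↦ ((hasDerivAt_id x).add_const _).log (by positivity) |>.congr_deriv
      (one_div _)
  exact (((hasDerivAt_id x).mul_const (log n)).add_const _).fun_sub hsum |>.congr_deriv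
    (by simp [digammaSeq])

theorem hasDerivAt_digammaSeq (n : ℕ) {x : ℝ} (hx : 0 < x) :
    HasDerivAt (digammaSeq · n) (trigammaSeq x n) x := by
  have hsum : HasDerivAt (fun y ↦ ∑ m ∈ range (n + 1), (y + (m : ℝ))⁻¹)
      (∑ m ∈ range (n + 1), -((x + (m : ℝ)) ^ 2)⁻¹) x :=
    HasDerivAt.fun_sum fun m _ ↦ by
      simpa [div_eq_mul_inv] using ((hasDerivAt_id x).add_const (m : ℝ)).fun_inv (by positivity)
  simpa [digammaSeq, trigammaSeq, sum_neg_distrib] using hsum.const_sub (log n)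

theorem trigammaSeq_add_inv_le (n : ℕ) {x : ℝ} (hx : 0 < x) :
    trigammaSeq x n + (x + n + 1 / 2)⁻¹ ≤ (x ^ 2)⁻¹ + (x + 1 / 2)⁻¹ := by
  induction n with
  | zero => simp [trigammaSeq]
  | succ n ih =>
    -- `1 / y² ≤ 1 / (y - 1/2) - 1 / (y + 1/2)` at `y = x + n + 1`
    have key : ((x + (n + 1)) ^ 2)⁻¹ + (x + (n + 1) + 1 / 2)⁻¹ ≤ (x + n + 1 / 2)⁻¹ := by
      rw [← sub_nonneg]
      have : (x + n + 1 / 2)⁻¹ - (((x + (n + 1)) ^ 2)⁻¹ + (x + (n + 1) + 1 / 2)⁻¹)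
          = 1 / (4 * (x + n + 1 / 2) * (x + n + 3 / 2) * (x + n + 1) ^ 2) := by
        field_simp
        ring
      rw [this]
      positivity
    simp only [trigammaSeq, sum_range_succ] at ih ⊢
    push_cast at ih ⊢
    linarith

theorem trigammaSeq_le (n : ℕ) {x : ℝ} (hx : 0 < x) :
    trigammaSeq x n ≤ (x ^ 2)⁻¹ + (x + 1 / 2)⁻¹ := by
  have h := trigammaSeq_add_inv_le n hx
  have hpos : 0 < (x + n + 1 / 2)⁻¹ := by positivity
  linarith

/-- At `x = 1 + t` this is the paper's `H(t) = ln (t Γ(t) / (1 + t) ^ t)`. -/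
noncomputable def logGammaDefect (x : ℝ) : ℝ := log (Gamma x) - (x - 1) * log x

noncomputable def logGammaDefectSeq (x : ℝ) (n : ℕ) : ℝ := logGammaSeq x n - (x - 1) * log x

theorem tendsto_logGammaDefectSeq {x : ℝ} (hx : 0 < x) :
    Tendsto (logGammaDefectSeq x) atTop (𝓝 (logGammaDefect x)) :=
  (tendsto_log_gamma hx).sub_const _

theorem hasDerivAt_sub_one_mul_log {x : ℝ} (hx : 0 < x) :
    HasDerivAt (fun y ↦ (y - 1) * log y) (log x + 1 - x⁻¹) x := by
  refine ((hasDerivAt_id' x).sub_const 1).fun_mul (hasDerivAt_log hx.ne') |>.congr_deriv ?_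
  field_simp
  ring

theorem hasDerivAt_log_add_one_sub_inv {x : ℝ} (hx : 0 < x) :
    HasDerivAt (fun y ↦ log y + 1 - y⁻¹) (x⁻¹ + (x ^ 2)⁻¹) x :=
  ((hasDerivAt_log hx.ne').add_const 1).fun_sub (hasDerivAt_inv hx.ne') |>.congr_deriv
    (sub_neg_eq_add _ _)

theorem hasDerivAt_logGammaDefectSeq (n : ℕ) {x : ℝ} (hx : 0 < x) :
    HasDerivAt (logGammaDefectSeq · n) (digammaSeq x n - (log x + 1 - x⁻¹)) x :=
  (hasDerivAt_logGammaSeq_s13 n hx).fun_sub (hasDerivAt_sub_one_mul_log hx)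

theorem hasDerivAt_deriv_logGammaDefectSeq (n : ℕ) {x : ℝ} (hx : 0 < x) :
    HasDerivAt (fun y ↦ digammaSeq y n - (log y + 1 - y⁻¹))
      (trigammaSeq x n - (x⁻¹ + (x ^ 2)⁻¹)) x :=
  (hasDerivAt_digammaSeq n hx).fun_sub (hasDerivAt_log_add_one_sub_inv hx)

theorem deriv2_logGammaDefectSeq_le (n : ℕ) {x : ℝ} (hx : 0 < x) :
    trigammaSeq x n - (x⁻¹ + (x ^ 2)⁻¹) ≤ -(x * (2 * x + 1))⁻¹ := by
  have h : (x + 1 / 2)⁻¹ - x⁻¹ = -(x * (2 * x + 1))⁻¹ := by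
    field_simp
    ring
  linarith [trigammaSeq_le n hx]

theorem concaveOn_logGammaDefectSeq_add_sq (n : ℕ) (R : ℝ) :
    ConcaveOn ℝ (Icc 1 R) (fun x ↦ logGammaDefectSeq x n + x ^ 2 / (2 * (R * (2 * R + 1)))) := by
  have hpos : ∀ x ∈ Icc 1 R, 0 < x := fun x hx ↦ by linarith [hx.1]
  have hd1 : ∀ x ∈ Icc 1 R,
      HasDerivAt (fun x ↦ logGammaDefectSeq x n + x ^ 2 / (2 * (R * (2 * R + 1))))
      (digammaSeq x n - (log x + 1 - x⁻¹) + x / (R * (2 * R + 1))) x := fun x hx ↦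
    (hasDerivAt_logGammaDefectSeq n (hpos x hx)).add
      (((hasDerivAt_pow 2 x).div_const _).congr_deriv (by field_simp; norm_num))
  have hd2 : ∀ x ∈ Icc 1 R,
      HasDerivAt (fun x ↦ digammaSeq x n - (log x + 1 - x⁻¹) + x / (R * (2 * R + 1)))
      (trigammaSeq x n - (x⁻¹ + (x ^ 2)⁻¹) + 1 / (R * (2 * R + 1))) x := fun x hx ↦
    (hasDerivAt_deriv_logGammaDefectSeq n (hpos x hx)).add ((hasDerivAt_id x).div_const _)
  refine concaveOn_of_hasDerivWithinAt2_nonpos (convex_Icc 1 R)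
    (f' := fun x ↦ digammaSeq x n - (log x + 1 - x⁻¹) + x / (R * (2 * R + 1)))
    (f'' := fun x ↦ trigammaSeq x n - (x⁻¹ + (x ^ 2)⁻¹) + 1 / (R * (2 * R + 1)))
    (fun x hx ↦ (hd1 x hx).continuousAt.continuousWithinAt) ?_ ?_ ?_
  all_goals rw [interior_Icc]
  · exact fun x hx ↦ (hd1 x (Ioo_subset_Icc_self hx)).hasDerivWithinAt
  · exact fun x hx ↦ (hd2 x (Ioo_subset_Icc_self hx)).hasDerivWithinAt
  · intro x hx
    have hx0 : 0 < x := by linarith [hx.1]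
    have hcR : 1 / (R * (2 * R + 1)) ≤ (x * (2 * x + 1))⁻¹ := by
      rw [one_div]
      exact inv_anti₀ (by positivity) (by nlinarith [hx.2])
    linarith [deriv2_logGammaDefectSeq_le n hx0]

theorem concaveOn_logGammaDefect_add_sq (R : ℝ) :
    ConcaveOn ℝ (Icc 1 R) (fun x ↦ logGammaDefect x + x ^ 2 / (2 * (R * (2 * R + 1)))) :=
  ConcaveOn.of_tendsto (l := atTop)
    (Eventually.of_forall fun n ↦ concaveOn_logGammaDefectSeq_add_sq n R)
    fun x hx ↦ (tendsto_logGammaDefectSeq (by linarith [hx.1])).add_const _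

theorem logGammaDefect_one : logGammaDefect 1 = 0 := by simp [logGammaDefect]

theorem logGammaDefect_one_add_mul_lt {k t : ℝ} (hk : 1 < k) (ht : 0 < t) :
    logGammaDefect (1 + k * t) < k * logGammaDefect (1 + t) := by
  set R := 1 + k * t
  have hR : 1 ≤ R := by nlinarith
  have hk0 : 0 < k := by linarith
  have hmem1 : (1 : ℝ) ∈ Icc 1 R := ⟨le_rfl, hR⟩
  have hmemR : R ∈ Icc 1 R := ⟨hR, le_rfl⟩
  have h := (concaveOn_logGammaDefect_add_sq R).2 hmem1 hmemR
    (sub_nonneg.2 (inv_le_one_of_one_le₀ hk.le)) (inv_nonneg.2 hk0.le) (sub_add_cancel 1 k⁻¹)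
  have hpt : (1 - k⁻¹) • (1 : ℝ) + k⁻¹ • R = 1 + t := by
    simp only [R, smul_eq_mul]; field_simp; ring
  rw [hpt] at h
  simp only [smul_eq_mul, logGammaDefect_one] at h
  set c := 2 * (R * (2 * R + 1))
  have hc : 0 < c := by positivity
  have gap : k * (1 + t) ^ 2 / c < (k - 1 + R ^ 2) / c := by
    gcongr
    nlinarith [mul_pos (mul_pos hk0 (sub_pos.2 hk)) (mul_pos ht ht)]
  have e : k * ((1 - k⁻¹) * (0 + 1 ^ 2 / c) + k⁻¹ * (logGammaDefect R + R ^ 2 / c))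
      = logGammaDefect R + (k - 1 + R ^ 2) / c := by
    field_simp
    ring
  have e' : k * (logGammaDefect (1 + t) + (1 + t) ^ 2 / c)
      = k * logGammaDefect (1 + t) + k * (1 + t) ^ 2 / c := by ring
  have hk_mul := mul_le_mul_of_nonneg_left h hk0.le
  linarith

theorem Gamma_one_add_mul_div_rpow_lt {k t : ℝ} (hk : 1 < k) (ht : 0 < t) :
    (Gamma (1 + k * t) / Gamma (1 + t) ^ k) ^ (1 / (k * t)) < (1 + k * t) / (1 + t) := by
  have hkt : 0 < k * t := by nlinarith
  have hG : 0 < Gamma (1 + t) := Gamma_pos_of_pos (by linarith)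
  have hGk : 0 < Gamma (1 + k * t) := Gamma_pos_of_pos (by linarith)
  have hq : 0 < Gamma (1 + k * t) / Gamma (1 + t) ^ k := div_pos hGk (rpow_pos_of_pos hG k)
  rw [← log_lt_log_iff (rpow_pos_of_pos hq _) (by positivity), log_rpow hq,
    log_div hGk.ne' (rpow_pos_of_pos hG k).ne', log_rpow hG,
    log_div (by positivity) (by positivity),
    one_div_mul_eq_div, div_lt_iff₀ hkt]
  have h := logGammaDefect_one_add_mul_lt hk ht
  simp only [logGammaDefect, add_sub_cancel_left] at h
  linarith

theorem pow_mul_Gamma_pow_div_mul_Gamma {K : ℕ} (hK : K ≠ 0) {t : ℝ} (ht : 0 < t) :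
    t ^ (K - 1) * Gamma t ^ K / (K * Gamma (K * t)) = Gamma (1 + t) ^ K / Gamma (1 + K * t) := by
  have hKt : 0 < K * t := by positivity
  rw [add_comm 1 t, add_comm 1 (K * t), Gamma_add_one ht.ne', Gamma_add_one hKt.ne', mul_pow]
  obtain ⟨m, rfl⟩ := Nat.exists_eq_succ_of_ne_zero hK
  have hΓ := (Gamma_pos_of_pos hKt).ne'
  field_simp
  simp [pow_succ]

/-- For K ≥ 2 and ε > 0, (1/V_ε)^{ε/K}/(K+ε) < 1/(1+ε) with
V_ε = (1/ε)^{K-1} Γ(1/ε)^K / (K Γ(K/ε)). -/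
theorem stmt13 (K : ℕ) (hK : 2 ≤ K) (ε : ℝ) (hε : 0 < ε) :
    (1 / ((1/ε) ^ (K - 1) * Real.Gamma (1/ε) ^ K / (K * Real.Gamma (K/ε)))) ^ (ε / K)
        / (K + ε)
      < 1 / (1 + ε) := by
  have hK1 : (1 : ℝ) < K := by exact_mod_cast hK
  have ht : 0 < 1 / ε := one_div_pos.2 hε
  have h := Gamma_one_add_mul_div_rpow_lt hK1 ht
  rw [rpow_natCast, show 1 / (K * (1 / ε)) = ε / K by field_simp,
    show (1 + K * (1 / ε)) / (1 + 1 / ε) = (K + ε) / (1 + ε) by field_simp; ring] at h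
  rw [show (K : ℝ) / ε = K * (1 / ε) by ring, pow_mul_Gamma_pow_div_mul_Gamma (by omega) ht,
    one_div_div]
  calc _ < (K + ε) / (1 + ε) / (K + ε) := by gcongr
    _ = 1 / (1 + ε) := by field_simp
end

section
/- Let s_n be random variables in [0,1] with s_n → s in probability, and let η₁, η₂, … be i.i.d. [0,1]-valued random variables with distribution function F that is continuous and strictly increasing on [0,1]. Let F_n be the empirical distribution function of η₁,…,η_n, and define the generalized inverse F*(u) = inf{x : F(x) ≥ u}. Then F_n*(s_n) → F*(s) in probability as n → ∞. -/
/-!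
Write `q = F*(s)`. By definition of the infimum `F (q - δ) < s`, and strict monotonicity of `F`
gives `s < F (q + δ)`. The strong law of large numbers, applied to the indicators of
`η i ≤ q ± δ`, makes `F_n (q ± δ) → F (q ± δ)` in probability, so with probability tending to
one `F_n (q - δ) < s_n ≤ F_n (q + δ)`, which traps `F_n*(s_n)` in `[q - δ, q + δ]`. Convergence
at these two points is all that is needed of Glivenko–Cantelli. When `q ± δ` leaves `[0, 1]`
the corresponding bound is automatic, since every quantile of a `[0, 1]`-valued sample lies in
`[0, 1]`.
-/

open MeasureTheory ProbabilityTheory Filter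

/-- Empirical distribution function of η₀,…,η_{n-1} evaluated at x. -/
noncomputable def empCDF {Ω : Type*} (η : ℕ → Ω → ℝ) (n : ℕ) (ω : Ω) (x : ℝ) : ℝ :=
  ((Finset.range n).filter (fun i => η i ω ≤ x)).card / n

/-- Generalized inverse F*(u) = inf {x : F(x) ≥ u}. -/
noncomputable def genInv (F : ℝ → ℝ) (u : ℝ) : ℝ := sInf {x : ℝ | u ≤ F x}

open Topology

section GenInv

variable {G : ℝ → ℝ} {u a c : ℝ}

-- `0 ≤ c` accounts for the junk value `sInf s = 0` of a set of reals unbounded below.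
theorem genInv_le_of_le (hc : 0 ≤ c) (h : u ≤ G c) : genInv G u ≤ c := by
  by_cases hb : BddBelow {x | u ≤ G x}
  · exact csInf_le hb h
  · rw [genInv, Real.sInf_of_not_bddBelow hb]
    exact hc

theorem le_apply_of_genInv_lt (hG : Monotone G) (hc : u ≤ G c) (h : genInv G u < a) :
    u ≤ G a := by
  obtain ⟨x, hx, hxa⟩ : ∃ x ∈ {x | u ≤ G x}, x < a := by
    by_cases hb : BddBelow {x | u ≤ G x}
    · exact exists_lt_of_csInf_lt ⟨c, hc⟩ h
    · exact not_bddBelow_iff.1 hb a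
  exact hx.trans (hG hxa.le)

theorem genInv_nonneg (hG : ∀ y < 0, G y = 0) (hu : 0 ≤ u) : 0 ≤ genInv G u := by
  rcases hu.eq_or_lt with rfl | hu
  · have hb : ¬BddBelow {x | 0 ≤ G x} := not_bddBelow_iff.2 fun x =>
      ⟨min x 0 - 1, (hG _ (by linarith [min_le_right x 0])).ge, by linarith [min_le_left x 0]⟩
    rw [genInv, Real.sInf_of_not_bddBelow hb]
  · refine Real.sInf_nonneg fun x hx => not_lt.1 fun hx0 => ?_
    exact (hu.trans_le hx).ne' (hG x hx0)

end GenInv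

section InMeasure

variable {ι Ω : Type*} [MeasurableSpace Ω] {μ : Measure Ω} {l : Filter ι}

theorem tendsto_measure_of_eventually_subset {A B : ι → Set Ω} (h : ∀ᶠ i in l, A i ⊆ B i)
    (hB : Tendsto (fun i => μ (B i)) l (𝓝 0)) : Tendsto (fun i => μ (A i)) l (𝓝 0) :=
  tendsto_of_tendsto_of_tendsto_of_le_of_le' tendsto_const_nhds hB
    (Eventually.of_forall fun _ => zero_le) (h.mono fun _ hi => measure_mono hi)

theorem tendsto_measure_of_eventually_subset_union {A B C : ι → Set Ω}
    (h : ∀ᶠ i in l, A i ⊆ B i ∪ C i) (hB : Tendsto (fun i => μ (B i)) l (𝓝 0))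
    (hC : Tendsto (fun i => μ (C i)) l (𝓝 0)) : Tendsto (fun i => μ (A i)) l (𝓝 0) :=
  tendsto_of_tendsto_of_tendsto_of_le_of_le' tendsto_const_nhds (by simpa using hB.add hC)
    (Eventually.of_forall fun _ => zero_le)
    (h.mono fun _ hi => (measure_mono hi).trans (measure_union_le _ _))

theorem tendstoInMeasure_const_of_forall_lt_abs {X : ι → Ω → ℝ} {x : ℝ}
    (h : ∀ ε > 0, Tendsto (fun i => μ {ω | ε < |X i ω - x|}) l (𝓝 0)) :
    TendstoInMeasure μ X l fun _ => x :=
  tendstoInMeasure_iff_dist.2 fun ε hε =>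
    tendsto_measure_of_eventually_subset
      (Eventually.of_forall fun _ ω (hω : ε ≤ dist _ _) => show ε / 2 < _ by
        rw [← Real.dist_eq]; linarith)
      (h (ε / 2) (half_pos hε))

theorem tendsto_measure_le_of_tendstoInMeasure {X Y : ι → Ω → ℝ} {x y : ℝ}
    (hX : TendstoInMeasure μ X l fun _ => x) (hY : TendstoInMeasure μ Y l fun _ => y)
    (hxy : x < y) : Tendsto (fun i => μ {ω | Y i ω ≤ X i ω}) l (𝓝 0) := by
  have hε : 0 < (y - x) / 2 := by linarith
  refine tendsto_measure_of_eventually_subset_union (Eventually.of_forall fun i ω hω => ?_)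
    (tendstoInMeasure_iff_dist.1 hX _ hε) (tendstoInMeasure_iff_dist.1 hY _ hε)
  simp only [Set.mem_union, Set.mem_ofPred_eq, Real.dist_eq] at hω ⊢
  by_contra! h
  rw [abs_lt, abs_lt] at h
  linarith [h.1.2, h.2.1]

end InMeasure

section EmpCDF

variable {Ω : Type*} {η : ℕ → Ω → ℝ}

theorem empCDF_eq_sum_indicator (n : ℕ) (ω : Ω) (x : ℝ) :
    empCDF η n ω x = (∑ i ∈ Finset.range n, (Set.Iic x).indicator 1 (η i ω)) / n := by
  simp [empCDF, Set.indicator_apply, Finset.sum_boole]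

theorem monotone_empCDF (n : ℕ) (ω : Ω) : Monotone (empCDF η n ω) := fun a b hab => by
  unfold empCDF
  gcongr

theorem empCDF_eq_zero_of_forall_lt {n : ℕ} {ω : Ω} {y : ℝ} (h : ∀ i, y < η i ω) :
    empCDF η n ω y = 0 := by
  simp [empCDF, Finset.filter_eq_empty_iff.2 fun i _ => not_le.2 (h i)]

theorem empCDF_eq_one_of_forall_le {n : ℕ} {ω : Ω} {x : ℝ} (hn : n ≠ 0) (h : ∀ i, η i ω ≤ x) :
    empCDF η n ω x = 1 := by
  simp [empCDF, Finset.filter_true_of_mem fun i _ => h i, hn]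

end EmpCDF

theorem tendstoInMeasure_empCDF {Ω : Type*} [MeasurableSpace Ω] {μ : Measure Ω}
    [IsFiniteMeasure μ] {η : ℕ → Ω → ℝ} (hmeas : ∀ i, Measurable (η i))
    (hindep : Pairwise fun i j => IndepFun (η i) (η j) μ)
    (hident : ∀ i, IdentDistrib (η i) (η 0) μ μ) (x : ℝ) :
    TendstoInMeasure μ (fun n ω => empCDF η n ω x) atTop fun _ => μ.real {ω | η 0 ω ≤ x} := by
  set f : ℝ → ℝ := (Set.Iic x).indicator 1
  have hf : Measurable f := measurable_one.indicator measurableSet_Iic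
  have hmeanf : μ[f ∘ η 0] = μ.real {ω | η 0 ω ≤ x} :=
    integral_indicator_one ((hmeas 0) measurableSet_Iic)
  have hslln := strong_law_ae_real (fun i => f ∘ η i)
    ((integrable_const 1).indicator ((hmeas 0) measurableSet_Iic))
    (fun i j hij => (hindep hij).comp hf hf) (fun i => (hident i).comp hf)
  simp only [hmeanf] at hslln
  simp only [empCDF_eq_sum_indicator]
  refine tendstoInMeasure_of_tendsto_ae (fun n => ?_) hslln
  exact ((Finset.measurable_sum _ fun i _ => hf.comp (hmeas i)).div_const _).aestronglyMeasurable

section GenInvInMeasure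

variable {ι Ω : Type*} [MeasurableSpace Ω] {μ : Measure Ω} {l : Filter ι}
  {Φ : ι → Ω → ℝ → ℝ} {s : ι → Ω → ℝ} {u y : ℝ}

theorem tendsto_measure_lt_genInv {b : ℝ} (hs : TendstoInMeasure μ s l fun _ => u)
    (hΦ : TendstoInMeasure μ (fun i ω => Φ i ω b) l fun _ => y) (hb : 0 ≤ b) (huy : u < y) :
    Tendsto (fun i => μ {ω | b < genInv (Φ i ω) (s i ω)}) l (𝓝 0) :=
  tendsto_measure_of_eventually_subset
    (Eventually.of_forall fun _ _ hω => le_of_not_ge fun h => hω.not_ge (genInv_le_of_le hb h))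
    (tendsto_measure_le_of_tendstoInMeasure hs hΦ huy)

theorem tendsto_measure_genInv_lt {a : ℝ} (hs : TendstoInMeasure μ s l fun _ => u)
    (hΦ : TendstoInMeasure μ (fun i ω => Φ i ω a) l fun _ => y) (hmono : ∀ i ω, Monotone (Φ i ω))
    (hne : ∀ᶠ i in l, ∀ ω, ∃ c, s i ω ≤ Φ i ω c) (hyu : y < u) :
    Tendsto (fun i => μ {ω | genInv (Φ i ω) (s i ω) < a}) l (𝓝 0) :=
  tendsto_measure_of_eventually_subset
    (hne.mono fun i hi ω hω => (hi ω).elim fun _ hc => le_apply_of_genInv_lt (hmono i ω) hc hω)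
    (tendsto_measure_le_of_tendstoInMeasure hΦ hs hyu)

end GenInvInMeasure

section CDF

variable {Ω : Type*} [MeasurableSpace Ω] {μ : Measure Ω} {X : Ω → ℝ}

theorem monotone_measureReal_le [IsFiniteMeasure μ] :
    Monotone fun x => μ.real {ω | X ω ≤ x} :=
  fun _ _ hxy => measureReal_mono fun _ hω => le_trans hω hxy

theorem measureReal_le_eq_zero {y : ℝ} (hX : ∀ ω, y < X ω) : μ.real {ω | X ω ≤ y} = 0 := by
  simp [fun ω => not_le.2 (hX ω)]

theorem measureReal_le_eq_one [IsProbabilityMeasure μ] {x : ℝ} (hX : ∀ ω, X ω ≤ x) :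
    μ.real {ω | X ω ≤ x} = 1 := by
  simp [hX]

end CDF

section Quantile

variable {Ω : Type*} [MeasurableSpace Ω] {μ : Measure Ω} {η : ℕ → Ω → ℝ} {s : ℕ → Ω → ℝ}
  {F : ℝ → ℝ} {u δ : ℝ}

theorem tendsto_measure_add_lt_genInv_empCDF (hη : ∀ i ω, η i ω ≤ 1) (hs1 : ∀ n ω, s n ω ≤ 1)
    (hs : TendstoInMeasure μ s atTop fun _ => u)
    (hemp : ∀ x, TendstoInMeasure μ (fun n ω => empCDF η n ω x) atTop fun _ => F x)
    (hF : Monotone F) (hF_strict : StrictMonoOn F (Set.Icc 0 1)) (hu : u ≤ F 1)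
    (hq : 0 ≤ genInv F u) (hδ : 0 < δ) :
    Tendsto (fun n => μ {ω | genInv F u + δ < genInv (empCDF η n ω) (s n ω)}) atTop (𝓝 0) := by
  set q := genInv F u
  rcases le_or_gt (q + δ) 1 with h1 | h1
  · have hu_lt : u < F (q + δ) :=
      (le_apply_of_genInv_lt hF hu (by linarith : q < q + δ / 2)).trans_lt
        (hF_strict ⟨by linarith, by linarith⟩ ⟨by linarith, h1⟩ (by linarith))
    exact tendsto_measure_lt_genInv hs (hemp _) (by linarith) hu_lt
  · refine tendsto_measure_of_eventually_subset (B := fun _ => ∅) ?_ (by simp)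
    filter_upwards [eventually_ne_atTop 0] with n hn ω hω
    have := genInv_le_of_le zero_le_one
      ((hs1 n ω).trans (empCDF_eq_one_of_forall_le hn (hη · ω)).ge)
    simp only [Set.mem_ofPred_eq] at hω
    linarith

theorem tendsto_measure_genInv_empCDF_lt_sub (hη : ∀ i ω, η i ω ∈ Set.Icc (0 : ℝ) 1)
    (hs01 : ∀ n ω, s n ω ∈ Set.Icc (0 : ℝ) 1) (hs : TendstoInMeasure μ s atTop fun _ => u)
    (hemp : ∀ x, TendstoInMeasure μ (fun n ω => empCDF η n ω x) atTop fun _ => F x)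
    (hδ : 0 < δ) :
    Tendsto (fun n => μ {ω | genInv (empCDF η n ω) (s n ω) < genInv F u - δ}) atTop (𝓝 0) := by
  set q := genInv F u
  rcases le_or_gt 0 (q - δ) with h0 | h0
  · have hF_lt : F (q - δ) < u := lt_of_not_ge fun h => by linarith [genInv_le_of_le h0 h]
    refine tendsto_measure_genInv_lt hs (hemp _) monotone_empCDF ?_ hF_lt
    filter_upwards [eventually_ne_atTop 0] with n hn ω
    exact ⟨1, (hs01 n ω).2.trans (empCDF_eq_one_of_forall_le hn fun i => (hη i ω).2).ge⟩
  · refine tendsto_measure_of_eventually_subset (B := fun _ => ∅) (Eventually.of_forall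
      fun n ω hω => ?_) (by simp)
    have : 0 ≤ genInv (empCDF η n ω) (s n ω) := genInv_nonneg
      (fun y hy => empCDF_eq_zero_of_forall_lt fun i => hy.trans_le (hη i ω).1) (hs01 n ω).1
    simp only [Set.mem_ofPred_eq] at hω
    linarith

end Quantile

theorem stmt14_general {Ω : Type*} [MeasureSpace Ω] [IsProbabilityMeasure (ℙ : Measure Ω)]
    (η : ℕ → Ω → ℝ) (s : ℕ → Ω → ℝ) (slim : ℝ)
    (hmeas : ∀ i, Measurable (η i))
    (hval : ∀ i ω, η i ω ∈ Set.Icc (0:ℝ) 1) (hsval : ∀ n ω, s n ω ∈ Set.Icc (0:ℝ) 1)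
    (hslim : slim ∈ Set.Icc (0:ℝ) 1)
    (hind : iIndepFun η ℙ)
    (hident : ∀ i, Measure.map (η i) ℙ = Measure.map (η 0) ℙ)
    (F : ℝ → ℝ) (hF : ∀ x, F x = (ℙ {ω | η 0 ω ≤ x}).toReal)
    (hFmono : StrictMonoOn F (Set.Icc 0 1))
    (hs : ∀ δ > 0, Tendsto (fun n => ℙ {ω | δ < |s n ω - slim|}) atTop (nhds 0)) :
    ∀ δ > 0,
      Tendsto (fun n => ℙ {ω | δ < |genInv (empCDF η n ω) (s n ω) - genInv F slim|})
        atTop (nhds 0) := by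
  intro δ hδ
  have hF_mono : Monotone F := by rw [funext hF]; exact monotone_measureReal_le
  have hF_one : F 1 = 1 := (hF 1).trans (measureReal_le_eq_one fun ω => (hval 0 ω).2)
  have hq : 0 ≤ genInv F slim := genInv_nonneg
    (fun y hy => (hF y).trans (measureReal_le_eq_zero fun ω => hy.trans_le (hval 0 ω).1)) hslim.1
  have hs' := tendstoInMeasure_const_of_forall_lt_abs hs
  have hemp : ∀ x, TendstoInMeasure ℙ (fun n ω => empCDF η n ω x) atTop fun _ => F x := by
    simp only [hF]
    exact tendstoInMeasure_empCDF hmeas (fun _ _ hij => hind.indepFun hij)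
      fun i => ⟨(hmeas i).aemeasurable, (hmeas 0).aemeasurable, hident i⟩
  refine tendsto_measure_of_eventually_subset_union (Eventually.of_forall fun n ω hω => ?_)
    (tendsto_measure_add_lt_genInv_empCDF (fun i ω => (hval i ω).2) (fun n ω => (hsval n ω).2)
      hs' hemp hF_mono hFmono (hslim.2.trans hF_one.ge) hq hδ)
    (tendsto_measure_genInv_empCDF_lt_sub hval hsval hs' hemp hδ)
  simp only [Set.mem_ofPred_eq, Set.mem_union, lt_abs] at hω ⊢
  rcases hω with h | h
  · exact Or.inl (by linarith)
  · exact Or.inr (by linarith)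

/-- If s_n → s in probability, η_i are i.i.d. [0,1]-valued with distribution function F
continuous and strictly increasing on [0,1], and F_n is the empirical distribution
function, then F_n*(s_n) → F*(s) in probability. -/
theorem stmt14 {Ω : Type*} [MeasureSpace Ω] [IsProbabilityMeasure (ℙ : Measure Ω)]
    (η : ℕ → Ω → ℝ) (s : ℕ → Ω → ℝ) (slim : ℝ)
    (hmeas : ∀ i, Measurable (η i)) (hsmeas : ∀ n, Measurable (s n))
    (hval : ∀ i ω, η i ω ∈ Set.Icc (0:ℝ) 1) (hsval : ∀ n ω, s n ω ∈ Set.Icc (0:ℝ) 1)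
    (hslim : slim ∈ Set.Icc (0:ℝ) 1)
    (hind : iIndepFun η ℙ)
    (hident : ∀ i, Measure.map (η i) ℙ = Measure.map (η 0) ℙ)
    (F : ℝ → ℝ) (hF : ∀ x, F x = (ℙ {ω | η 0 ω ≤ x}).toReal)
    (hFcont : ContinuousOn F (Set.Icc 0 1)) (hFmono : StrictMonoOn F (Set.Icc 0 1))
    (hs : ∀ δ > 0, Tendsto (fun n => ℙ {ω | δ < |s n ω - slim|}) atTop (nhds 0)) :
    ∀ δ > 0,
      Tendsto (fun n => ℙ {ω | δ < |genInv (empCDF η n ω) (s n ω) - genInv F slim|})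
        atTop (nhds 0) :=
  stmt14_general η s slim hmeas hval hsval hslim hind hident F hF hFmono hs
end

section
/- Let g : [0,1]^K → [0,∞) be continuous, Γ_u = {x ∈ [0,1]^K : g(x) ≥ u}, and suppose h(u) := Leb(Γ_u) is continuous and strictly decreasing onto [0,1] as u ranges over [0, sup g]. Define G(A) = ∫_A g dx and D_t = Γ_{h*(t)} with h*(t) = inf{u ≥ 0 : h(u) ≤ t}. Then the function t ↦ G(D_t) is strictly concave on [0,1]: for 0 ≤ t₁ < t₂ < t₃ ≤ 1, (G(D_{t₂}) − G(D_{t₁}))/(t₂ − t₁) > (G(D_{t₃}) − G(D_{t₂}))/(t₃ − t₂). -/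
open MeasureTheory

/-- The unit cube [0,1]^K. -/
def unitCube (K : ℕ) : Set (Fin K → ℝ) := {x | ∀ k, x k ∈ Set.Icc (0:ℝ) 1}

/-- Γ_u = {x ∈ [0,1]^K : g(x) ≥ u}. -/
def upperSet {K : ℕ} (g : (Fin K → ℝ) → ℝ) (u : ℝ) : Set (Fin K → ℝ) :=
  {x ∈ unitCube K | u ≤ g x}

/-! Writing `t_k = h u_k` with `u₁ > u₂ > u₃`, the set `D_{t_k}` is `Γ_{u_k}`, so each difference
quotient is the average of `g` over a layer `Γ_{u_{k+1}} \ Γ_{u_k}` of measure `t_{k+1} - t_k`, on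
which `u_{k+1} ≤ g < u_k`. Hence the quotient over `(t₂, t₃)` is `< u₂`, and the one over
`(t₁, t₂)` is `≥ u₂`. -/

open Set

theorem MeasureTheory.setIntegral_lt_of_lt_const {X : Type*} [MeasurableSpace X]
    {μ : Measure X} {f : X → ℝ} {s : Set X} {c : ℝ} (hs : MeasurableSet s)
    (hμs : μ s ≠ ⊤) (hμs₀ : μ s ≠ 0) (hf : ∀ x ∈ s, f x < c) (hfint : IntegrableOn f s μ) :
    ∫ x in s, f x ∂μ < c * μ.real s := by
  have hconst : IntegrableOn (fun _ ↦ c) s μ := integrableOn_const hμs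
  have hgap : 0 < ∫ x in s, (c - f x) ∂μ := by
    refine (setIntegral_pos_iff_support_of_nonneg_ae ?_ (hconst.sub hfint)).2 ?_
    · exact (ae_restrict_iff' hs).2 (.of_forall fun x hx ↦ sub_nonneg.2 (hf x hx).le)
    · have hsupp : Function.support ((fun _ ↦ c) - f) ∩ s = s :=
        inter_eq_right.2 fun x hx ↦ sub_ne_zero.2 (hf x hx).ne'
      rwa [hsupp, pos_iff_ne_zero]
  rw [integral_sub hconst hfint, setIntegral_const, smul_eq_mul] at hgap
  linarith

theorem isCompact_unitCube (K : ℕ) : IsCompact (unitCube K) := by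
  convert isCompact_Icc (a := (0 : Fin K → ℝ)) (b := 1)
  ext x
  simp [unitCube, Pi.le_def, forall_and]

section upperSet

variable {K : ℕ} {g : (Fin K → ℝ) → ℝ}

theorem upperSet_subset_unitCube (u : ℝ) : upperSet g u ⊆ unitCube K := fun _ hx ↦ hx.1

theorem upperSet_antitone : Antitone (upperSet g) := fun _ _ huv _ hx ↦ ⟨hx.1, huv.trans hx.2⟩

theorem volume_upperSet_ne_top (u : ℝ) : volume (upperSet g u) ≠ ⊤ :=
  measure_ne_top_of_subset (upperSet_subset_unitCube u) (isCompact_unitCube K).measure_ne_top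

theorem measurableSet_upperSet (hgc : ContinuousOn g (unitCube K)) (u : ℝ) :
    MeasurableSet (upperSet g u) :=
  (hgc.preimage_isClosed_of_isClosed (isCompact_unitCube K).isClosed isClosed_Ici).measurableSet

theorem integrableOn_upperSet (hgc : ContinuousOn g (unitCube K)) (u : ℝ) :
    IntegrableOn g (upperSet g u) :=
  (hgc.integrableOn_compact (isCompact_unitCube K)).mono_set (upperSet_subset_unitCube u)

theorem integral_upperSet_sub_div_mem_Ico (hgc : ContinuousOn g (unitCube K)) {a b : ℝ}
    (hab : a ≤ b) (hvol : volume.real (upperSet g b) < volume.real (upperSet g a)) :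
    ((∫ x in upperSet g a, g x) - ∫ x in upperSet g b, g x) /
        (volume.real (upperSet g a) - volume.real (upperSet g b)) ∈ Ico a b := by
  have hsub := upperSet_antitone (g := g) hab
  have hmeas_b := measurableSet_upperSet hgc b
  set layer := upperSet g a \ upperSet g b
  have hmeas : MeasurableSet layer := (measurableSet_upperSet hgc a).diff hmeas_b
  have hint : IntegrableOn g layer := (integrableOn_upperSet hgc a).mono_set sdiff_subset
  have hfin : volume layer ≠ ⊤ :=
    measure_ne_top_of_subset sdiff_subset (volume_upperSet_ne_top a)
  have hvol_layer : volume.real layer = volume.real (upperSet g a) - volume.real (upperSet g b) :=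
    measureReal_sdiff hsub hmeas_b (volume_upperSet_ne_top a)
  have hpos : 0 < volume.real layer := by linarith
  have hg_ge : ∀ x ∈ layer, a ≤ g x := fun x hx ↦ hx.1.2
  have hg_lt : ∀ x ∈ layer, g x < b := fun x hx ↦ not_le.1 fun hbx ↦ hx.2 ⟨hx.1.1, hbx⟩
  rw [← setIntegral_sdiff hmeas_b (integrableOn_upperSet hgc a) hsub, ← hvol_layer]
  exact ⟨(le_div_iff₀ hpos).2 (setIntegral_ge_of_const_le_real hmeas hfin hg_ge hint),
    (div_lt_iff₀ hpos).2 (setIntegral_lt_of_lt_const hmeas hfin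
      (ENNReal.toReal_pos_iff.1 hpos).1.ne' hg_lt hint)⟩

end upperSet

theorem csInf_setOf_nonneg_le_apply {h : ℝ → ℝ} {M u : ℝ} (hh : StrictAntiOn h (Icc 0 M))
    (hu : u ∈ Icc 0 M) : sInf {v : ℝ | 0 ≤ v ∧ h v ≤ h u} = u :=
  IsLeast.csInf_eq ⟨⟨hu.1, le_rfl⟩, fun _ hv ↦ not_lt.1 fun hvu ↦
    (hh ⟨hv.1, hvu.le.trans hu.2⟩ hu hvu).not_ge hv.2⟩

theorem stmt15_general (K : ℕ) (g : (Fin K → ℝ) → ℝ)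
    (hgc : ContinuousOn g (unitCube K))
    (M : ℝ)
    (h : ℝ → ℝ) (hh : ∀ u, h u = (volume (upperSet g u)).toReal)
    (hhanti : StrictAntiOn h (Set.Icc 0 M))
    (hhonto : h '' Set.Icc 0 M = Set.Icc 0 1)
    (t₁ t₂ t₃ : ℝ) (h0 : 0 ≤ t₁) (h12 : t₁ < t₂) (h23 : t₂ < t₃) (h1 : t₃ ≤ 1) :
    ((∫ x in upperSet g (sInf {u : ℝ | 0 ≤ u ∧ h u ≤ t₃}), g x)
        - ∫ x in upperSet g (sInf {u : ℝ | 0 ≤ u ∧ h u ≤ t₂}), g x) / (t₃ - t₂)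
      < ((∫ x in upperSet g (sInf {u : ℝ | 0 ≤ u ∧ h u ≤ t₂}), g x)
        - ∫ x in upperSet g (sInf {u : ℝ | 0 ≤ u ∧ h u ≤ t₁}), g x) / (t₂ - t₁) := by
  obtain ⟨u₁, hu₁, rfl⟩ : t₁ ∈ h '' Icc 0 M := hhonto ▸ ⟨h0, by linarith⟩
  obtain ⟨u₂, hu₂, rfl⟩ : t₂ ∈ h '' Icc 0 M := hhonto ▸ ⟨by linarith, by linarith⟩
  obtain ⟨u₃, hu₃, rfl⟩ : t₃ ∈ h '' Icc 0 M := hhonto ▸ ⟨by linarith, h1⟩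
  have hu₂₁ : u₂ < u₁ := (hhanti.lt_iff_gt hu₁ hu₂).1 h12
  have hu₃₂ : u₃ < u₂ := (hhanti.lt_iff_gt hu₂ hu₃).1 h23
  rw [csInf_setOf_nonneg_le_apply hhanti hu₁, csInf_setOf_nonneg_le_apply hhanti hu₂,
    csInf_setOf_nonneg_le_apply hhanti hu₃]
  simp only [hh, ← measureReal_def] at h12 h23 ⊢
  calc _ < u₂ := (integral_upperSet_sub_div_mem_Ico hgc hu₃₂.le h23).2
    _ ≤ _ := (integral_upperSet_sub_div_mem_Ico hgc hu₂₁.le h12).1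

/-- Let g ≥ 0 be continuous on [0,1]^K, h(u) = Leb(Γ_u) continuous and strictly
decreasing onto [0,1] for u ∈ [0, sup g], h*(t) = inf{u ≥ 0 : h(u) ≤ t},
D_t = Γ_{h*(t)} and G(A) = ∫_A g.  Then t ↦ G(D_t) is strictly concave on [0,1]:
for 0 ≤ t₁ < t₂ < t₃ ≤ 1 the difference quotients strictly decrease. -/
theorem stmt15 (K : ℕ) (g : (Fin K → ℝ) → ℝ)
    (hgc : ContinuousOn g (unitCube K)) (hg0 : ∀ x ∈ unitCube K, 0 ≤ g x)
    (M : ℝ) (hM : M = sSup (g '' unitCube K))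
    (h : ℝ → ℝ) (hh : ∀ u, h u = (volume (upperSet g u)).toReal)
    (hhcont : ContinuousOn h (Set.Icc 0 M))
    (hhanti : StrictAntiOn h (Set.Icc 0 M))
    (hhonto : h '' Set.Icc 0 M = Set.Icc 0 1)
    (t₁ t₂ t₃ : ℝ) (h0 : 0 ≤ t₁) (h12 : t₁ < t₂) (h23 : t₂ < t₃) (h1 : t₃ ≤ 1) :
    ((∫ x in upperSet g (sInf {u : ℝ | 0 ≤ u ∧ h u ≤ t₃}), g x)
        - ∫ x in upperSet g (sInf {u : ℝ | 0 ≤ u ∧ h u ≤ t₂}), g x) / (t₃ - t₂)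
      < ((∫ x in upperSet g (sInf {u : ℝ | 0 ≤ u ∧ h u ≤ t₂}), g x)
        - ∫ x in upperSet g (sInf {u : ℝ | 0 ≤ u ∧ h u ≤ t₁}), g x) / (t₂ - t₁) :=
  stmt15_general K g hgc M h hh hhanti hhonto t₁ t₂ t₃ h0 h12 h23 h1
end

section
/- Let F₀ be a distribution on ℝ with continuous density f₀ and let f be another continuous density with support contained in supp(f₀), such that r(x) = f(x)/f₀(x) is strictly increasing on supp(f) with limit ρ := lim_{x→∞} r(x) < ∞ and (0,∞) ⊂ supp(f). Let F(x) = ∫_{−∞}^x f. Then sup_x F(x)/F₀(x) < ρ. -/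
/-!
The ratio r = f/f₀ increases strictly to ρ, so r < ρ wherever f > 0. Left of 1 this gives
F ≤ r(1) F₀ with r(1) < ρ. Right of 1, the gap ρ F₀ - F = ∫_{(-∞, x]} (ρ f₀ - f) is at least the
positive mass δ of ρ f₀ - f on [0, 1], so F/F₀ ≤ ρ - δ/F₀ stays below ρ because F₀ is
bounded.
-/

open MeasureTheory Filter Topology

theorem StrictMonoOn.lt_of_tendsto_atTop {α β : Type*} [LinearOrder α] [Nonempty α]
    [NoMaxOrder α] [TopologicalSpace β] [Preorder β] [OrderClosedTopology β]
    {g : α → β} {s : Set α} {b : β} {x : α} (hg : StrictMonoOn g s) (hs : ∀ᶠ y in atTop, y ∈ s)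
    (hlim : Tendsto g atTop (𝓝 b)) (hx : x ∈ s) : g x < b := by
  obtain ⟨y, hy, hxy⟩ := (hs.and (eventually_gt_atTop x)).exists
  have hyb : g y ≤ b := ge_of_tendsto hlim <| by
    filter_upwards [hs, eventually_gt_atTop y] with z hz hyz
    exact (hg hy hz hyz).le
  exact (hg hx hy hxy).trans_le hyb

theorem le_mul_of_div_le_of_pos_imp_pos {a b c : ℝ} (ha : 0 ≤ a) (hb : 0 ≤ b) (hc : 0 ≤ c)
    (hab : 0 < a → 0 < b) (h : 0 < a → a / b ≤ c) : a ≤ c * b := by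
  rcases ha.lt_or_eq with ha | rfl
  · exact (div_le_iff₀ (hab ha)).mp (h ha)
  · positivity

theorem intervalIntegral_le_setIntegral_Iic {g : ℝ → ℝ} {a b x : ℝ} (hg : ∀ t, 0 ≤ g t)
    (hint : IntegrableOn g (Set.Iic x)) (hab : a ≤ b) (hbx : b ≤ x) :
    ∫ t in a..b, g t ≤ ∫ t in Set.Iic x, g t := by
  rw [intervalIntegral.integral_of_le hab]
  exact setIntegral_mono_set hint (Eventually.of_forall hg)
    (Set.Ioc_subset_Iic_self.trans (Set.Iic_subset_Iic.mpr hbx)).eventuallyLE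

theorem setIntegral_Iic_le_const_mul {f f₀ : ℝ → ℝ} {c x : ℝ} (hfint : Integrable f)
    (hf₀int : Integrable f₀) (h : ∀ t ≤ x, f t ≤ c * f₀ t) :
    ∫ t in Set.Iic x, f t ≤ c * ∫ t in Set.Iic x, f₀ t := by
  rw [← integral_const_mul]
  exact setIntegral_mono_on hfint.integrableOn (hf₀int.const_mul c).integrableOn
    measurableSet_Iic h

theorem bddAbove_range_setIntegral_Iic {f : ℝ → ℝ} (hf : ∀ t, 0 ≤ f t) (hint : Integrable f) :
    BddAbove (Set.range fun x => ∫ t in Set.Iic x, f t) := by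
  refine ⟨∫ t, f t, ?_⟩
  rintro _ ⟨x, rfl⟩
  exact setIntegral_le_integral hint (Eventually.of_forall hf)

theorem exists_lt_forall_div_le_of_gap {F F₀ : ℝ → ℝ} {a c ρ δ : ℝ} (hc : 0 ≤ c)
    (hcρ : c < ρ) (hδ : 0 < δ) (hF₀ : ∀ x, 0 ≤ F₀ x) (hbdd : BddAbove (Set.range F₀))
    (hleft : ∀ x < a, F x ≤ c * F₀ x) (hright : ∀ x, a ≤ x → F x ≤ ρ * F₀ x - δ) :
    ∃ L < ρ, ∀ x, F x / F₀ x ≤ L := by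
  obtain ⟨M, hM⟩ := hbdd
  have hM1 : 0 < max M 1 := lt_max_of_lt_right one_pos
  refine ⟨max c (ρ - δ / max M 1), max_lt hcρ (sub_lt_self ρ (div_pos hδ hM1)), fun x => ?_⟩
  rcases (hF₀ x).lt_or_eq with hpos | hzero
  · rw [div_le_iff₀ hpos]
    rcases lt_or_ge x a with hx | hx
    · exact (hleft x hx).trans (mul_le_mul_of_nonneg_right (le_max_left _ _) hpos.le)
    · have hFM : F₀ x ≤ max M 1 := (hM ⟨x, rfl⟩).trans (le_max_left _ _)
      have hδF : δ / max M 1 * F₀ x ≤ δ := by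
        rw [div_mul_eq_mul_div, div_le_iff₀ hM1]
        exact mul_le_mul_of_nonneg_left hFM hδ.le
      calc F x ≤ ρ * F₀ x - δ := hright x hx
        _ ≤ (ρ - δ / max M 1) * F₀ x := by linarith
        _ ≤ max c (ρ - δ / max M 1) * F₀ x :=
          mul_le_mul_of_nonneg_right (le_max_right _ _) hpos.le
  · rw [← hzero, div_zero]
    exact hc.trans (le_max_left _ _)

theorem stmt16_general (f₀ f : ℝ → ℝ) (ρ : ℝ)
    (hf₀0 : ∀ x, 0 ≤ f₀ x) (hf0 : ∀ x, 0 ≤ f x)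
    (hf₀int : Integrable f₀) (hfint : Integrable f)
    (hsupp : {x | 0 < f x} ⊆ {x | 0 < f₀ x})
    (hpos : Set.Ioi (0:ℝ) ⊆ {x | 0 < f x})
    (hmono : StrictMonoOn (fun x => f x / f₀ x) {x | 0 < f x})
    (hlim : Tendsto (fun x => f x / f₀ x) atTop (nhds ρ)) :
    ∃ L < ρ, ∀ x : ℝ, (∫ t in Set.Iic x, f t) / (∫ t in Set.Iic x, f₀ t) ≤ L := by
  have hrρ : ∀ t, 0 < f t → f t / f₀ t < ρ := fun t ht =>
    hmono.lt_of_tendsto_atTop ((eventually_gt_atTop 0).mono hpos) hlim ht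
  have hf1 : 0 < f 1 := hpos (Set.mem_Ioi.mpr one_pos)
  have hc0 : 0 < f 1 / f₀ 1 := div_pos hf1 (hsupp hf1)
  have hgap : ∀ t, 0 ≤ ρ * f₀ t - f t := fun t => sub_nonneg.mpr <|
    le_mul_of_div_le_of_pos_imp_pos (hf0 t) (hf₀0 t) (hc0.trans (hrρ 1 hf1)).le (@hsupp t)
      fun ht => (hrρ t ht).le
  have hgapint : Integrable fun t => ρ * f₀ t - f t := (hf₀int.const_mul ρ).sub hfint
  have hδ : 0 < ∫ t in (0:ℝ)..1, ρ * f₀ t - f t :=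
    intervalIntegral.intervalIntegral_pos_of_pos_on hgapint.intervalIntegrable
      (fun t ht => sub_pos.mpr ((div_lt_iff₀ (hsupp (hpos ht.1))).mp (hrρ t (hpos ht.1))))
      one_pos
  refine exists_lt_forall_div_le_of_gap (a := 1) hc0.le (hrρ 1 hf1) hδ
    (fun x => setIntegral_nonneg measurableSet_Iic fun t _ => hf₀0 t)
    (bddAbove_range_setIntegral_Iic hf₀0 hf₀int) ?_ ?_
  · exact fun x hx => setIntegral_Iic_le_const_mul hfint hf₀int fun t ht =>
      le_mul_of_div_le_of_pos_imp_pos (hf0 t) (hf₀0 t) hc0.le (@hsupp t)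
        fun htpos => (hmono htpos hf1 (ht.trans_lt hx)).le
  · intro x hx
    have hmass := intervalIntegral_le_setIntegral_Iic hgap hgapint.integrableOn zero_le_one hx
    rw [integral_sub (hf₀int.const_mul ρ).integrableOn hfint.integrableOn,
      integral_const_mul] at hmass
    linarith

/-- Let f₀, f be continuous probability densities with {f > 0} ⊆ {f₀ > 0} and
(0,∞) ⊆ {f > 0}, such that r = f/f₀ is strictly increasing on {f > 0} with
finite limit ρ at +∞.  Then sup_x F(x)/F₀(x) < ρ, where F, F₀ are the
corresponding distribution functions. -/
theorem stmt16 (f₀ f : ℝ → ℝ) (ρ : ℝ)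
    (hf₀c : Continuous f₀) (hfc : Continuous f)
    (hf₀0 : ∀ x, 0 ≤ f₀ x) (hf0 : ∀ x, 0 ≤ f x)
    (hf₀int : Integrable f₀) (hfint : Integrable f)
    (hf₀1 : ∫ x, f₀ x = 1) (hf1 : ∫ x, f x = 1)
    (hsupp : {x | 0 < f x} ⊆ {x | 0 < f₀ x})
    (hpos : Set.Ioi (0:ℝ) ⊆ {x | 0 < f x})
    (hmono : StrictMonoOn (fun x => f x / f₀ x) {x | 0 < f x})
    (hlim : Tendsto (fun x => f x / f₀ x) atTop (nhds ρ)) :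
    ∃ L < ρ, ∀ x : ℝ, (∫ t in Set.Iic x, f t) / (∫ t in Set.Iic x, f₀ t) ≤ L :=
  stmt16_general f₀ f ρ hf₀0 hf0 hf₀int hfint hsupp hpos hmono hlim
end

section
/- Let f₀₁, f₀₂ be probability densities on (0,∞) with f₀ₖ(x) ~ x^{−sₖ} as x → ∞ for some s₁ = s₂ = s > 1, and let f₁, f₂ be densities with fₖ(x) ~ ρₖ x^{−s} as x → ∞, where ρ₁, ρ₂ > 0. Then the convolution ratio r(x) = (∫₀^x f₁(t)f₂(x−t) dt)/(∫₀^x f₀₁(t)f₀₂(x−t) dt) satisfies r(x) → (ρ₁ + ρ₂)/2 as x → ∞. -/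
/-!
Split the convolution integral at `x / 2` and reflect the upper half by `t ↦ x - t`, so that both
halves have the form `∫_{(0, x/2]} f t * g (x - t) dt`. There `x - t ≥ x / 2`, so
`g (x - t) / x ^ (-s)` is bounded uniformly in `t` and tends to `b` for each fixed `t`; dominated
convergence against the integrable `f` gives the limit `b * ∫ f`. Hence the convolution of two
densities with tails `a x^{-s}` and `b x^{-s}` is asymptotic to `(a + b) x^{-s}`, and the ratio
tends to `(ρ₁ + ρ₂) / (1 + 1)`.
-/

open MeasureTheory Filter Set Asymptotics Topology

section

variable {f g : ℝ → ℝ} {s a b : ℝ}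

lemma exists_eventually_abs_comp_sub_le (hs : 0 ≤ s)
    (hg : Tendsto (fun x => g x / x ^ (-s)) atTop (𝓝 b)) :
    ∃ C > 0, ∀ᶠ x in atTop, ∀ t ≤ x / 2, |g (x - t)| ≤ C * x ^ (-s) := by
  have hO : g =O[atTop] fun x => x ^ (-s) :=
    isBigO_of_div_tendsto_nhds (by
      filter_upwards [eventually_gt_atTop 0] with x hx h
      exact absurd h (Real.rpow_pos_of_pos hx _).ne') b hg
  obtain ⟨c, hc, hcO⟩ := hO.exists_pos
  obtain ⟨M, hM⟩ := eventually_atTop.mp (hcO.bound.and (eventually_gt_atTop 0))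
  refine ⟨c * 2 ^ s, by positivity, ?_⟩
  filter_upwards [eventually_ge_atTop (2 * M)] with x hx t ht
  obtain ⟨hbound, hpos⟩ := hM (x - t) (by linarith)
  have hx2 : 0 < x / 2 := (hM (x / 2) (by linarith)).2
  calc |g (x - t)| ≤ c * (x - t) ^ (-s) := by
        simpa [Real.norm_eq_abs, abs_of_pos (Real.rpow_pos_of_pos hpos _)] using hbound
    _ ≤ c * (x / 2) ^ (-s) := by
        have := Real.rpow_le_rpow_of_nonpos (y := x - t) hx2 (by linarith only [ht])
          (neg_nonpos.mpr hs)
        exact mul_le_mul_of_nonneg_left this hc.le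
    _ = c * 2 ^ s * x ^ (-s) := by
        rw [Real.div_rpow (by linarith) zero_le_two, Real.rpow_neg zero_le_two]
        field_simp

lemma Filter.Tendsto.comp_sub_div_rpow_neg
    (hg : Tendsto (fun x => g x / x ^ (-s)) atTop (𝓝 b)) (t : ℝ) :
    Tendsto (fun x => g (x - t) / x ^ (-s)) atTop (𝓝 b) := by
  have hshift : Tendsto (fun x => g (x - t) / (x - t) ^ (-s)) atTop (𝓝 b) :=
    hg.comp (tendsto_atTop_add_const_right _ (-t) tendsto_id)
  have hratio : Tendsto (fun x : ℝ => (1 - t / x) ^ (-s)) atTop (𝓝 1) := by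
    simpa using ((tendsto_const_nhds (x := (1 : ℝ))).sub
      (tendsto_const_nhds.div_atTop tendsto_id)).rpow_const (p := -s) (by simp)
  refine (by simpa using hshift.mul hratio : Tendsto _ _ (𝓝 b)).congr' ?_
  filter_upwards [eventually_gt_atTop 0, eventually_gt_atTop t] with x hx hxt
  rw [show 1 - t / x = (x - t) / x by field_simp, Real.div_rpow (by linarith) hx.le]
  have : (x - t) ^ (-s) ≠ 0 := (Real.rpow_pos_of_pos (by linarith) _).ne'
  field_simp

lemma eventually_integrableOn_Ioc_half_mul_comp_sub (hs : 0 ≤ s) (hf : IntegrableOn f (Ioi 0))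
    (hg : Measurable g) (hgb : Tendsto (fun x => g x / x ^ (-s)) atTop (𝓝 b)) :
    ∀ᶠ x in atTop, IntegrableOn (fun t => f t * g (x - t)) (Ioc 0 (x / 2)) := by
  obtain ⟨C, -, hC⟩ := exists_eventually_abs_comp_sub_le hs hgb
  filter_upwards [hC] with x hx
  refine Integrable.mono' ((hf.mono_set Ioc_subset_Ioi_self).norm.mul_const (C * x ^ (-s)))
    ((hf.mono_set Ioc_subset_Ioi_self).aestronglyMeasurable.mul
      (hg.comp (measurable_const.sub measurable_id)).aestronglyMeasurable) ?_
  filter_upwards [ae_restrict_mem measurableSet_Ioc] with t ht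
  rw [norm_mul, Real.norm_eq_abs (g _)]
  exact mul_le_mul_of_nonneg_left (hx t ht.2) (norm_nonneg _)

theorem tendsto_setIntegral_Ioc_half_mul_comp_sub_div_rpow (hs : 0 ≤ s)
    (hf : IntegrableOn f (Ioi 0)) (hg : Measurable g)
    (hgb : Tendsto (fun x => g x / x ^ (-s)) atTop (𝓝 b)) :
    Tendsto (fun x => (∫ t in Ioc 0 (x / 2), f t * g (x - t)) / x ^ (-s)) atTop
      (𝓝 ((∫ t in Ioi 0, f t) * b)) := by
  -- dominated convergence needs a fixed domain, so the moving interval goes into the integrand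
  -- dominated convergence needs a fixed domain, so the moving interval goes into the integrand
  set F : ℝ → ℝ → ℝ := fun x => (Ioc 0 (x / 2)).indicator fun t => f t * (g (x - t) / x ^ (-s))
  have hF : ∀ x, (∫ t in Ioc 0 (x / 2), f t * g (x - t)) / x ^ (-s) = ∫ t in Ioi 0, F x t := by
    intro x
    rw [setIntegral_indicator measurableSet_Ioc, inter_eq_right.mpr Ioc_subset_Ioi_self,
      ← integral_div]
    simp only [mul_div_assoc]
  simp only [hF, ← integral_mul_const]
  obtain ⟨C, hC0, hC⟩ := exists_eventually_abs_comp_sub_le hs hgb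
  refine tendsto_integral_filter_of_dominated_convergence (fun t => ‖f t‖ * C) ?_ ?_
    (hf.norm.mul_const C) ?_
  · refine Eventually.of_forall fun x => ?_
    exact (hf.aestronglyMeasurable.mul ((hg.comp (measurable_const.sub measurable_id)).div_const
      _).aestronglyMeasurable).indicator measurableSet_Ioc
  · filter_upwards [hC, eventually_gt_atTop 0] with x hx hx0
    refine Eventually.of_forall fun t => ?_
    by_cases ht : t ∈ Ioc 0 (x / 2)
    · have hxs := Real.rpow_pos_of_pos hx0 (-s)
      simp only [F, indicator_of_mem ht, norm_mul, Real.norm_eq_abs (_ / _), abs_div,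
        abs_of_pos hxs]
      gcongr
      exact (div_le_iff₀ hxs).mpr (hx t ht.2)
    · simp only [F, indicator_of_notMem ht, norm_zero]
      positivity
  · filter_upwards [ae_restrict_mem measurableSet_Ioi] with t ht
    refine (tendsto_const_nhds.mul (hgb.comp_sub_div_rpow_neg t)).congr' ?_
    filter_upwards [eventually_ge_atTop (2 * t)] with x hx
    have hmem : t ∈ Ioc 0 (x / 2) := ⟨ht, by linarith⟩
    simp only [F, indicator_of_mem hmem]

lemma setIntegral_Ioc_mul_comp_sub_eq_add {x : ℝ} (hx : 0 ≤ x)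
    (hfg : IntegrableOn (fun t => f t * g (x - t)) (Ioc 0 (x / 2)))
    (hgf : IntegrableOn (fun t => g t * f (x - t)) (Ioc 0 (x / 2))) :
    ∫ t in Ioc 0 x, f t * g (x - t) =
      (∫ t in Ioc 0 (x / 2), f t * g (x - t)) + ∫ t in Ioc 0 (x / 2), g t * f (x - t) := by
  have hx2 : 0 ≤ x / 2 := by positivity
  have hreflect : (fun t => f t * g (x - t)) = fun t => g (x - t) * f (x - (x - t)) := by
    ext t; rw [sub_sub_cancel, mul_comm]
  have hupper : IntervalIntegrable (fun t => f t * g (x - t)) volume (x / 2) x := by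
    have := ((intervalIntegrable_iff_integrableOn_Ioc_of_le hx2).mpr hgf).comp_sub_left x
    rw [hreflect]
    simpa [show x - x / 2 = x / 2 by ring] using this.symm
  rw [← intervalIntegral.integral_of_le hx, ← intervalIntegral.integral_add_adjacent_intervals
    ((intervalIntegrable_iff_integrableOn_Ioc_of_le hx2).mpr hfg) hupper,
    intervalIntegral.integral_of_le hx2, hreflect,
    intervalIntegral.integral_comp_sub_left (fun u => g u * f (x - u)),
    show x - x / 2 = x / 2 by ring, sub_self, intervalIntegral.integral_of_le hx2]

theorem tendsto_setIntegral_Ioc_mul_comp_sub_div_rpow (hs : 0 ≤ s)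
    (hf : IntegrableOn f (Ioi 0)) (hg : IntegrableOn g (Ioi 0))
    (hfm : Measurable f) (hgm : Measurable g)
    (hfa : Tendsto (fun x => f x / x ^ (-s)) atTop (𝓝 a))
    (hgb : Tendsto (fun x => g x / x ^ (-s)) atTop (𝓝 b)) :
    Tendsto (fun x => (∫ t in Ioc 0 x, f t * g (x - t)) / x ^ (-s)) atTop
      (𝓝 ((∫ t in Ioi 0, f t) * b + (∫ t in Ioi 0, g t) * a)) := by
  refine ((tendsto_setIntegral_Ioc_half_mul_comp_sub_div_rpow hs hf hgm hgb).add
    (tendsto_setIntegral_Ioc_half_mul_comp_sub_div_rpow hs hg hfm hfa)).congr' ?_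
  filter_upwards [eventually_integrableOn_Ioc_half_mul_comp_sub hs hf hgm hgb,
    eventually_integrableOn_Ioc_half_mul_comp_sub hs hg hfm hfa, eventually_ge_atTop 0]
    with x hfg hgf hx
  rw [setIntegral_Ioc_mul_comp_sub_eq_add hx hfg hgf, add_div]

lemma setIntegral_Ioi_zero_eq_integral (hf : ∀ x ≤ 0, f x = 0) :
    ∫ t in Ioi 0, f t = ∫ t, f t :=
  setIntegral_eq_integral_of_forall_compl_eq_zero fun x hx => hf x (not_lt.mp hx)

theorem tendsto_setIntegral_Ioc_mul_comp_sub_div_rpow_of_integral_eq_one (hs : 0 ≤ s)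
    (hfm : Measurable f) (hgm : Measurable g)
    (hf0 : ∀ x ≤ 0, f x = 0) (hg0 : ∀ x ≤ 0, g x = 0)
    (hf1 : ∫ x, f x = 1) (hg1 : ∫ x, g x = 1)
    (hfa : Tendsto (fun x => f x / x ^ (-s)) atTop (𝓝 a))
    (hgb : Tendsto (fun x => g x / x ^ (-s)) atTop (𝓝 b)) :
    Tendsto (fun x => (∫ t in Ioc 0 x, f t * g (x - t)) / x ^ (-s)) atTop (𝓝 (a + b)) := by
  have hf := (Integrable.of_integral_ne_zero (hf1 ▸ one_ne_zero)).integrableOn (s := Ioi 0)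
  have hg := (Integrable.of_integral_ne_zero (hg1 ▸ one_ne_zero)).integrableOn (s := Ioi 0)
  have := tendsto_setIntegral_Ioc_mul_comp_sub_div_rpow hs hf hg hfm hgm hfa hgb
  rwa [setIntegral_Ioi_zero_eq_integral hf0, setIntegral_Ioi_zero_eq_integral hg0, hf1, hg1,
    one_mul, one_mul, add_comm] at this

end

theorem stmt17_general (f₀₁ f₀₂ f₁ f₂ : ℝ → ℝ) (s ρ₁ ρ₂ : ℝ) (hs : 1 < s)
    (hm : Measurable f₀₁ ∧ Measurable f₀₂ ∧ Measurable f₁ ∧ Measurable f₂)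
    (hz : ∀ x ≤ 0, f₀₁ x = 0 ∧ f₀₂ x = 0 ∧ f₁ x = 0 ∧ f₂ x = 0)
    (hint : (∫ x, f₀₁ x = 1) ∧ (∫ x, f₀₂ x = 1) ∧ (∫ x, f₁ x = 1) ∧ (∫ x, f₂ x = 1))
    (h01 : Tendsto (fun x => f₀₁ x / x ^ (-s)) atTop (nhds 1))
    (h02 : Tendsto (fun x => f₀₂ x / x ^ (-s)) atTop (nhds 1))
    (h1 : Tendsto (fun x => f₁ x / x ^ (-s)) atTop (nhds ρ₁))
    (h2 : Tendsto (fun x => f₂ x / x ^ (-s)) atTop (nhds ρ₂)) :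
    Tendsto (fun x => (∫ t in Set.Ioc (0:ℝ) x, f₁ t * f₂ (x - t))
        / (∫ t in Set.Ioc (0:ℝ) x, f₀₁ t * f₀₂ (x - t))) atTop (nhds ((ρ₁ + ρ₂) / 2)) := by
  obtain ⟨hm₀₁, hm₀₂, hm₁, hm₂⟩ := hm
  obtain ⟨hi₀₁, hi₀₂, hi₁, hi₂⟩ := hint
  have hs₀ : 0 ≤ s := by linarith
  have hnum := tendsto_setIntegral_Ioc_mul_comp_sub_div_rpow_of_integral_eq_one hs₀ hm₁ hm₂
    (fun x hx => (hz x hx).2.2.1) (fun x hx => (hz x hx).2.2.2) hi₁ hi₂ h1 h2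
  have hden := tendsto_setIntegral_Ioc_mul_comp_sub_div_rpow_of_integral_eq_one hs₀ hm₀₁ hm₀₂
    (fun x hx => (hz x hx).1) (fun x hx => (hz x hx).2.1) hi₀₁ hi₀₂ h01 h02
  rw [show (2 : ℝ) = 1 + 1 by norm_num]
  refine (hnum.div hden (by norm_num)).congr' ?_
  filter_upwards [eventually_gt_atTop 0] with x hx
  exact div_div_div_cancel_right₀ (Real.rpow_pos_of_pos hx _).ne' _ _

/-- Let f₀₁, f₀₂, f₁, f₂ be probability densities supported on (0,∞), with
f₀ₖ(x) ~ x^{−s} and fₖ(x) ~ ρₖ x^{−s} as x → ∞ (s > 1, ρₖ > 0).  Then the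
convolution ratio
r(x) = (∫₀^x f₁(t)f₂(x−t) dt)/(∫₀^x f₀₁(t)f₀₂(x−t) dt) → (ρ₁+ρ₂)/2 as x → ∞. -/
theorem stmt17 (f₀₁ f₀₂ f₁ f₂ : ℝ → ℝ) (s ρ₁ ρ₂ : ℝ) (hs : 1 < s)
    (hρ₁ : 0 < ρ₁) (hρ₂ : 0 < ρ₂)
    (hm : Measurable f₀₁ ∧ Measurable f₀₂ ∧ Measurable f₁ ∧ Measurable f₂)
    (hnn : (∀ x, 0 ≤ f₀₁ x) ∧ (∀ x, 0 ≤ f₀₂ x) ∧ (∀ x, 0 ≤ f₁ x) ∧ (∀ x, 0 ≤ f₂ x))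
    (hz : ∀ x ≤ 0, f₀₁ x = 0 ∧ f₀₂ x = 0 ∧ f₁ x = 0 ∧ f₂ x = 0)
    (hint : (∫ x, f₀₁ x = 1) ∧ (∫ x, f₀₂ x = 1) ∧ (∫ x, f₁ x = 1) ∧ (∫ x, f₂ x = 1))
    (h01 : Tendsto (fun x => f₀₁ x / x ^ (-s)) atTop (nhds 1))
    (h02 : Tendsto (fun x => f₀₂ x / x ^ (-s)) atTop (nhds 1))
    (h1 : Tendsto (fun x => f₁ x / x ^ (-s)) atTop (nhds ρ₁))
    (h2 : Tendsto (fun x => f₂ x / x ^ (-s)) atTop (nhds ρ₂)) :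
    Tendsto (fun x => (∫ t in Set.Ioc (0:ℝ) x, f₁ t * f₂ (x - t))
        / (∫ t in Set.Ioc (0:ℝ) x, f₀₁ t * f₀₂ (x - t))) atTop (nhds ((ρ₁ + ρ₂) / 2)) :=
  stmt17_general f₀₁ f₀₂ f₁ f₂ s ρ₁ ρ₂ hs hm hz hint h01 h02 h1 h2
end

section
/- Let t_{p,δ} denote the density of the noncentral t distribution with p degrees of freedom and noncentrality δ ≥ 0, and t_p = t_{p,0}. Then as x → ∞, the likelihood ratio satisfies t_{p,δ}(x)/t_p(x) = r − d·x^{−2} + o(x^{−2}), where r = e^{−δ²/2} Σ_{k≥0} C_k (√2 δ)^k, d = (e^{−δ²/2} p/2) Σ_{k≥1} k C_k (√2 δ)^k, and C_k = Γ((p+1+k)/2)/(k! Γ((p+1)/2)); in particular r = sup_x t_{p,δ}(x)/t_p(x) is finite. -/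
open Filter Topology Asymptotics

/-- C_k = Γ((p+1+k)/2) / (k! Γ((p+1)/2)). -/
noncomputable def nctC (p : ℝ) (k : ℕ) : ℝ :=
  Real.Gamma ((p + 1 + k) / 2) / (k.factorial * Real.Gamma ((p + 1) / 2))

/-- Density of the noncentral t distribution with p degrees of freedom and
noncentrality δ. -/
noncomputable def nctDensity (p δ x : ℝ) : ℝ :=
  (p ^ (p / 2) * Real.Gamma ((p + 1) / 2) / (Real.sqrt Real.pi * Real.Gamma (p / 2)))
    * Real.exp (-δ ^ 2 / 2) * (p + x ^ 2) ^ (-(p + 1) / 2)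
    * ∑' k : ℕ, nctC p k * (Real.sqrt 2 * δ) ^ k * (x ^ 2 / (p + x ^ 2)) ^ ((k : ℝ) / 2)

/-!
With `W(x) = √(x² / (p + x²)) ∈ [0, 1)` the ratio is `e^{-δ²/2} g(W(x))`, where
`g(y) = Σ C_k (√2 δ)^k y^k` is an entire power series with nonnegative coefficients: the
recurrence `C_{k+2} = C_k (p + 1 + k) / (2 (k + 1) (k + 2))` makes it converge everywhere. Hence
the ratio is at most `e^{-δ²/2} g(1) = r` and tends to it. Since `(W(x)² - 1) x² → -p`, the chain
rule for `v ↦ g(√v)` at `v = 1` gives `(g(W(x)) - g(1)) x² → -(p/2) g'(1)`, which is the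
`x^{-2}` term with `e^{-δ²/2} (p/2) g'(1) = d`.
-/

theorem tendsto_of_tendsto_sub_mul_atTop {α : Type*} {l : Filter α} {W h : α → ℝ} {a L : ℝ}
    (hW : Tendsto (fun x => (W x - a) * h x) l (𝓝 L)) (hh : Tendsto h l atTop) :
    Tendsto W l (𝓝 a) := by
  have hlim := (hW.div_atTop hh).add_const a
  rw [zero_add] at hlim
  refine hlim.congr' ?_
  filter_upwards [hh.eventually_ne_atTop 0] with x hx
  rw [mul_div_cancel_right₀ _ hx, sub_add_cancel]

theorem HasDerivAt.tendsto_sub_comp_mul {α : Type*} {l : Filter α} {g : ℝ → ℝ} {W h : α → ℝ}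
    {D a L : ℝ} (hg : HasDerivAt g D a) (hW : Tendsto (fun x => (W x - a) * h x) l (𝓝 L))
    (hh : Tendsto h l atTop) :
    Tendsto (fun x => (g (W x) - g a) * h x) l (𝓝 (D * L)) := by
  have hlin : (fun x => g (W x) - g a - (W x - a) * D) =o[l] fun x => W x - a :=
    (hasDerivAt_iff_isLittleO.mp hg).comp_tendsto (tendsto_of_tendsto_sub_mul_atTop hW hh)
  have hrem : Tendsto (fun x => (g (W x) - g a - (W x - a) * D) * h x) l (𝓝 0) :=
    (isLittleO_one_iff ℝ).1 ((hlin.mul_isBigO (isBigO_refl h l)).trans_isBigO (hW.isBigO_one ℝ))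
  have hsum := hrem.add (hW.const_mul D)
  rw [zero_add] at hsum
  exact hsum.congr fun x => by ring

theorem summable_of_norm_add_two_le {E : Type*} [SeminormedAddCommGroup E] [CompleteSpace E]
    {f : ℕ → E} {r : ℝ} (hr : r < 1) (h : ∀ᶠ n in atTop, ‖f (n + 2)‖ ≤ r * ‖f n‖) :
    Summable f := by
  have hsub : ∀ c : ℕ, Summable fun n => f (2 * n + c) := fun c =>
    have hc : Tendsto (fun n => 2 * n + c) atTop atTop :=
      tendsto_atTop_mono (fun n => show n ≤ 2 * n + c by omega) tendsto_id
    summable_of_ratio_norm_eventually_le hr <| (hc.eventually h).mono fun n hn => by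
      rwa [show 2 * (n + 1) + c = 2 * n + c + 2 by ring]
  exact Summable.even_add_odd (hsub 0) (hsub 1)

theorem ciSup_eq_of_forall_le_of_tendsto {α : Type*} {l : Filter α} [l.NeBot] {f : α → ℝ} {r : ℝ}
    (hle : ∀ x, f x ≤ r) (hf : Tendsto f l (𝓝 r)) : ⨆ x, f x = r :=
  have := l.nonempty_of_neBot
  ciSup_eq_of_forall_le_of_forall_lt_exists_gt hle fun _ hw =>
    (hf.eventually (lt_mem_nhds hw)).exists

section nctC

variable {p : ℝ}

theorem nctC_pos (hp : 0 < p + 1) (k : ℕ) : 0 < nctC p k :=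
  div_pos (Real.Gamma_pos_of_pos (by positivity))
    (mul_pos (mod_cast k.factorial_pos) (Real.Gamma_pos_of_pos (by positivity)))

theorem nctC_zero (hp : 0 < p + 1) : nctC p 0 = 1 := by
  simpa [nctC] using (Real.Gamma_pos_of_pos (by positivity : 0 < (p + 1) / 2)).ne'

theorem nctC_add_two (hp : 0 < p + 1) (k : ℕ) :
    nctC p (k + 2) = nctC p k * ((p + 1 + k) / (2 * (k + 1) * (k + 2))) := by
  have hΓ : Real.Gamma ((p + 1) / 2) ≠ 0 := (Real.Gamma_pos_of_pos (by positivity)).ne'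
  have hshift : (p + 1 + (k + 2 : ℕ)) / 2 = (p + 1 + k) / 2 + 1 := by push_cast; ring
  rw [nctC, nctC, hshift, Real.Gamma_add_one (by positivity), Nat.factorial_succ,
    Nat.factorial_succ]
  push_cast
  field_simp
  ring

theorem summable_nctC_mul_pow (hp : 0 < p + 1) (s : ℝ) :
    Summable fun k => nctC p k * s ^ k := by
  refine summable_of_norm_add_two_le (r := 1 / 2) (by norm_num) ?_
  filter_upwards [tendsto_natCast_atTop_atTop.eventually_ge_atTop (p + 1 + 2 * s ^ 2)] with k hk
  have hC := nctC_pos hp k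
  have hratio : (p + 1 + k) / (2 * (k + 1) * (k + 2)) * s ^ 2 ≤ 1 / 2 := by
    rw [div_mul_eq_mul_div, div_le_iff₀ (by positivity)]
    nlinarith [sq_nonneg s]
  simp only [norm_mul, norm_pow, Real.norm_eq_abs, abs_of_pos hC, nctC_add_two hp,
    abs_of_nonneg (by positivity : (0 : ℝ) ≤ (p + 1 + k) / (2 * (k + 1) * (k + 2)))]
  calc nctC p k * ((p + 1 + k) / (2 * (k + 1) * (k + 2))) * |s| ^ (k + 2)
      = ((p + 1 + k) / (2 * (k + 1) * (k + 2)) * s ^ 2) * (nctC p k * |s| ^ k) := by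
        rw [pow_add, sq_abs]; ring
    _ ≤ 1 / 2 * (nctC p k * |s| ^ k) := by gcongr

end nctC

theorem hasDerivAt_tsum_mul_pow {a : ℕ → ℝ} (ha : ∀ R, Summable fun k => ‖a k‖ * R ^ k)
    (y₀ : ℝ) :
    HasDerivAt (fun y => ∑' k, a k * y ^ k) (∑' k, a k * (k * y₀ ^ (k - 1))) y₀ := by
  set R := |y₀| + 1
  have hR : 1 ≤ R := by simp [R]
  have hy₀ : y₀ ∈ Metric.ball 0 R := by simp [R]
  refine hasDerivAt_tsum_of_isPreconnected (ha (2 * R)) Metric.isOpen_ball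
    (convex_ball 0 R).isPreconnected (fun k y _ => (hasDerivAt_pow k y).const_mul (a k))
    (fun k y hy => ?_) hy₀ ((ha |y₀|).of_norm_bounded fun k => by simp) hy₀
  have hy : |y| ≤ R := by simpa using (Metric.mem_ball.1 hy).le
  have hk : (k : ℝ) ≤ 2 ^ k := mod_cast (Nat.lt_two_pow_self).le
  calc ‖a k * (k * y ^ (k - 1))‖ = ‖a k‖ * (k * |y| ^ (k - 1)) := by simp
    _ ≤ ‖a k‖ * (2 ^ k * R ^ k) := by
        gcongr
        calc |y| ^ (k - 1) ≤ R ^ (k - 1) := by gcongr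
          _ ≤ R ^ k := pow_le_pow_right₀ hR (Nat.sub_le k 1)
    _ = ‖a k‖ * (2 * R) ^ k := by rw [mul_pow]

noncomputable def nctSeries (p t y : ℝ) : ℝ := ∑' k : ℕ, nctC p k * t ^ k * y ^ k

section nctSeries

variable {p : ℝ}

theorem nctSeries_zero_left (hp : 0 < p + 1) (y : ℝ) : nctSeries p 0 y = 1 := by
  rw [nctSeries, tsum_eq_single 0 fun k hk => by simp [hk], nctC_zero hp]
  simp

theorem hasDerivAt_nctSeries_one (hp : 0 < p + 1) (t : ℝ) :
    HasDerivAt (nctSeries p t) (∑' k : ℕ, k * nctC p k * t ^ k) 1 := by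
  have hsum : ∀ R, Summable fun k => ‖nctC p k * t ^ k‖ * R ^ k := fun R =>
    (summable_nctC_mul_pow hp (|t| * R)).congr fun k => by
      simp [abs_of_pos (nctC_pos hp k), mul_pow, mul_assoc]
  have h := hasDerivAt_tsum_mul_pow hsum 1
  simp only [one_pow, mul_one] at h
  exact h.congr_deriv (tsum_congr fun k => by ring)

theorem monotoneOn_nctSeries (hp : 0 < p + 1) {t : ℝ} (ht : 0 ≤ t) :
    MonotoneOn (nctSeries p t) (Set.Ici 0) := by
  intro y hy z _ hyz
  have hsummable : ∀ y, Summable fun k => nctC p k * t ^ k * y ^ k := fun y =>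
    (summable_nctC_mul_pow hp (t * y)).congr fun k => by ring
  refine (hsummable y).tsum_le_tsum (fun k => ?_) (hsummable z)
  have := nctC_pos hp k
  gcongr

theorem hasDerivAt_nctSeries_sqrt_one (hp : 0 < p + 1) (t : ℝ) :
    HasDerivAt (fun v => nctSeries p t √v) ((∑' k : ℕ, k * nctC p k * t ^ k) / 2) 1 := by
  have hsqrt := Real.hasDerivAt_sqrt one_ne_zero
  rw [Real.sqrt_one, mul_one] at hsqrt
  exact ((Real.sqrt_one ▸ hasDerivAt_nctSeries_one hp t).comp 1 hsqrt).congr_deriv (by ring)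

theorem nctSeries_sqrt_le_sqrt_one (hp : 0 < p + 1) {t v : ℝ} (ht : 0 ≤ t) (hv : v ≤ 1) :
    nctSeries p t √v ≤ nctSeries p t √1 :=
  monotoneOn_nctSeries hp ht (Real.sqrt_nonneg _) (Real.sqrt_nonneg _) (Real.sqrt_le_sqrt hv)

end nctSeries

theorem nctDensity_eq {p : ℝ} (hp : 0 ≤ p) (δ x : ℝ) :
    nctDensity p δ x = p ^ (p / 2) * Real.Gamma ((p + 1) / 2) / (√Real.pi * Real.Gamma (p / 2))
      * (p + x ^ 2) ^ (-(p + 1) / 2)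
      * (Real.exp (-δ ^ 2 / 2) * nctSeries p (√2 * δ) √(x ^ 2 / (p + x ^ 2))) := by
  have hpow : ∀ k : ℕ, (x ^ 2 / (p + x ^ 2)) ^ ((k : ℝ) / 2) = √(x ^ 2 / (p + x ^ 2)) ^ k := by
    intro k
    rw [Real.sqrt_eq_rpow, ← Real.rpow_mul_natCast (by positivity)]
    ring_nf
  simp only [nctDensity, nctSeries, hpow]
  ring

theorem tendsto_sq_div_add_sq_sub_one_mul_sq (p : ℝ) :
    Tendsto (fun x : ℝ => (x ^ 2 / (p + x ^ 2) - 1) * x ^ 2) atTop (𝓝 (-p)) := by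
  have hq : Tendsto (fun x : ℝ => p + x ^ 2) atTop atTop :=
    tendsto_atTop_add_const_left _ p (tendsto_pow_atTop two_ne_zero)
  have hlim := (tendsto_const_nhds (x := p ^ 2)).div_atTop hq |>.const_add (-p)
  rw [add_zero] at hlim
  refine hlim.congr' ?_
  filter_upwards [hq.eventually_gt_atTop 0] with x hx
  field_simp
  ring

theorem nctDensity_div_nctDensity_zero {p : ℝ} (hp : 0 < p) (δ x : ℝ) :
    nctDensity p δ x / nctDensity p 0 x
      = Real.exp (-δ ^ 2 / 2) * nctSeries p (√2 * δ) √(x ^ 2 / (p + x ^ 2)) := by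
  have hA : 0 < p ^ (p / 2) * Real.Gamma ((p + 1) / 2) / (√Real.pi * Real.Gamma (p / 2)) := by
    have := Real.Gamma_pos_of_pos (by positivity : 0 < (p + 1) / 2)
    have := Real.Gamma_pos_of_pos (by positivity : 0 < p / 2)
    positivity
  have hB : 0 < (p + x ^ 2) ^ (-(p + 1) / 2) := Real.rpow_pos_of_pos (by positivity) _
  rw [nctDensity_eq hp.le, nctDensity_eq hp.le, mul_zero, nctSeries_zero_left (by linarith)]
  simp only [zero_pow two_ne_zero, neg_zero, zero_div, Real.exp_zero]
  field_simp

/-- As x → ∞, t_{p,δ}(x)/t_p(x) = r − d x^{−2} + o(x^{−2}), with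
r = e^{−δ²/2} Σ_k C_k(√2 δ)^k and d = (e^{−δ²/2} p/2) Σ_{k≥1} k C_k(√2 δ)^k;
in particular r = sup_x t_{p,δ}(x)/t_p(x) < ∞. -/
theorem stmt18 (p δ : ℝ) (hp : 0 < p) (hδ : 0 ≤ δ)
    (r d : ℝ)
    (hr : r = Real.exp (-δ ^ 2 / 2) * ∑' k : ℕ, nctC p k * (Real.sqrt 2 * δ) ^ k)
    (hd : d = Real.exp (-δ ^ 2 / 2) * p / 2
        * ∑' k : ℕ, (k : ℝ) * nctC p k * (Real.sqrt 2 * δ) ^ k) :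
    Tendsto (fun x : ℝ =>
        (nctDensity p δ x / nctDensity p 0 x - (r - d / x ^ 2)) * x ^ 2)
      atTop (nhds 0)
    ∧ (⨆ x : ℝ, nctDensity p δ x / nctDensity p 0 x) = r := by
  set t := √2 * δ
  set G : ℝ → ℝ := fun v => nctSeries p t √v
  have hratio : ∀ x, nctDensity p δ x / nctDensity p 0 x
      = Real.exp (-δ ^ 2 / 2) * G (x ^ 2 / (p + x ^ 2)) :=
    nctDensity_div_nctDensity_zero hp δ
  have hr' : r = Real.exp (-δ ^ 2 / 2) * G 1 := by simp [hr, G, nctSeries]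
  have hG := hasDerivAt_nctSeries_sqrt_one (by linarith : 0 < p + 1) t
  have hV := tendsto_sq_div_add_sq_sub_one_mul_sq p
  have hsq : Tendsto (fun x : ℝ => x ^ 2) atTop atTop := tendsto_pow_atTop two_ne_zero
  constructor
  · have hlim := ((hG.tendsto_sub_comp_mul hV hsq).const_mul (Real.exp (-δ ^ 2 / 2))).add_const d
    rw [hd, show ∀ a b : ℝ, a * (b / 2 * -p) + a * p / 2 * b = 0 by intros; ring] at hlim
    refine hlim.congr' ?_
    filter_upwards [eventually_ne_atTop 0] with x hx
    rw [hratio, hr', hd]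
    field_simp
    ring
  · have hle : ∀ x, nctDensity p δ x / nctDensity p 0 x ≤ r := fun x => by
      rw [hratio, hr']
      gcongr
      exact nctSeries_sqrt_le_sqrt_one (by linarith) (by positivity)
        ((div_le_one (by positivity)).2 (by linarith))
    have hto : Tendsto (fun x => nctDensity p δ x / nctDensity p 0 x) atTop (𝓝 r) := by
      simp only [hratio, hr']
      exact (hG.continuousAt.tendsto.comp (tendsto_of_tendsto_sub_mul_atTop hV hsq)).const_mul _
    exact ciSup_eq_of_forall_le_of_tendsto hle hto
end
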